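/- arXiv:1004.5394 — 8 statements merged into one kernel-verified Lean document; each statement's English description precedes it below -/
import Mathlib

section
/- Let P be an odd integer and Q a positive integer with gcd(P,Q)=1, and set α = P/(4Q). Then the inhomogeneous quantum walk with parameter α, started at the origin, is restricted to the finite interval [-Q,Q]: for every time t ∈ ℕ and every n ∈ ℤ with |n| > Q, one has ψ_t(n;L) = ψ_t(n;R) = 0 (equivalently Pr(n;t) = 0), and moreover ψ_t(Q;L) = ψ_t(-Q;R) = 0 for all t. -/
open Real

/-- For `α = P/(4Q)` with `P` odd and `gcd(P,Q) = 1`, the inhomogeneous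
quantum walk started at the origin is restricted to the interval `[-Q, Q]`. -/
theorem inhomogeneous_qw_restricted (P Q : ℤ) (hP : Odd P) (hQ : 0 < Q)
    (hgcd : Int.gcd P Q = 1) (α : ℝ) (hα : α = (P : ℝ) / (4 * (Q : ℝ)))
    (ψL ψR : ℕ → ℤ → ℂ) (a b : ℂ)
    (hnorm : ‖a‖ ^ 2 + ‖b‖ ^ 2 = 1)
    (h0L : ψL 0 0 = a) (h0R : ψR 0 0 = b)
    (h0 : ∀ n : ℤ, n ≠ 0 → ψL 0 n = 0 ∧ ψR 0 n = 0)
    (hrecL : ∀ (t : ℕ) (n : ℤ), ψL (t + 1) n =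
      (Real.cos (2 * π * α * ((n : ℝ) + 1)) : ℂ) * ψL t (n + 1) -
      (Real.sin (2 * π * α * ((n : ℝ) + 1)) : ℂ) * ψR t (n + 1))
    (hrecR : ∀ (t : ℕ) (n : ℤ), ψR (t + 1) n =
      (Real.sin (2 * π * α * ((n : ℝ) - 1)) : ℂ) * ψL t (n - 1) +
      (Real.cos (2 * π * α * ((n : ℝ) - 1)) : ℂ) * ψR t (n - 1)) :
    (∀ (t : ℕ) (n : ℤ), Q < |n| →
      ψL t n = 0 ∧ ψR t n = 0 ∧
      ‖ψL t n‖ ^ 2 + ‖ψR t n‖ ^ 2 = 0) ∧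
    (∀ t : ℕ, ψL t Q = 0 ∧ ψR t (-Q) = 0) := by
  have hQR : (Q : ℝ) ≠ 0 := by
    exact_mod_cast hQ.ne'
  have key : Real.cos (2 * π * α * (Q : ℝ)) = 0 := by
    obtain ⟨k, hk⟩ := hP
    have harg : 2 * π * α * (Q : ℝ) = (k : ℝ) * π + π / 2 := by
      rw [hα, hk]
      push_cast
      field_simp
      ring
    rw [harg, Real.cos_add, Real.cos_pi_div_two, Real.sin_pi_div_two,
      Real.sin_int_mul_pi]
    ring
  have keyneg : Real.cos (2 * π * α * (-(Q : ℝ))) = 0 := by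
    have : 2 * π * α * (-(Q : ℝ)) = -(2 * π * α * (Q : ℝ)) := by ring
    rw [this, Real.cos_neg, key]
  have inv : ∀ t : ℕ,
      (∀ n : ℤ, Q ≤ n → ψL t n = 0) ∧ (∀ n : ℤ, Q < n → ψR t n = 0) ∧
      (∀ n : ℤ, n ≤ -Q → ψR t n = 0) ∧ (∀ n : ℤ, n < -Q → ψL t n = 0) := by
    intro t
    induction t with
    | zero =>
      refine ⟨fun n hn => (h0 n (by omega)).1, fun n hn => (h0 n (by omega)).2,
        fun n hn => (h0 n (by omega)).2, fun n hn => (h0 n (by omega)).1⟩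
    | succ t ih =>
      obtain ⟨hL, hR, hR', hL'⟩ := ih
      refine ⟨?_, ?_, ?_, ?_⟩
      · intro n hn
        rw [hrecL, hL (n + 1) (by omega), hR (n + 1) (by omega)]
        ring
      · intro n hn
        rw [hrecR, hL (n - 1) (by omega)]
        by_cases h : n = Q + 1
        · have hcast : ((n : ℝ) - 1) = (Q : ℝ) := by
            subst h; push_cast; ring
          rw [hcast, key]
          simp
        · rw [hR (n - 1) (by omega)]
          ring
      · intro n hn
        rw [hrecR, hL' (n - 1) (by omega), hR' (n - 1) (by omega)]
        ring
      · intro n hn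
        rw [hrecL, hR' (n + 1) (by omega)]
        by_cases h : n = -Q - 1
        · have hcast : ((n : ℝ) + 1) = -(Q : ℝ) := by
            subst h; push_cast; ring
          rw [hcast, keyneg]
          simp
        · rw [hL' (n + 1) (by omega)]
          ring
  constructor
  · intro t n hn
    rw [lt_abs] at hn
    obtain ⟨hL, hR, hR', hL'⟩ := inv t
    rcases lt_or_ge n 0 with h | h
    · have h1 : ψL t n = 0 := hL' n (by omega)
      have h2 : ψR t n = 0 := hR' n (by omega)
      refine ⟨h1, h2, by simp [h1, h2]⟩
    · have h1 : ψL t n = 0 := hL n (by omega)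
      have h2 : ψR t n = 0 := hR n (by omega)
      refine ⟨h1, h2, by simp [h1, h2]⟩
  · intro t
    obtain ⟨hL, _, hR', _⟩ := inv t
    exact ⟨hL Q le_rfl, hR' (-Q) le_rfl⟩
end

section
/- For any irrational number α, there are infinitely many fractions P/(4Q) with P an odd integer, Q a positive integer, and gcd(P,Q) = 1, satisfying |α − P/(4Q)| < 1/(4Q²). Precisely, the set of pairs (P,Q) ∈ ℤ × ℕ with P odd, Q ≥ 1, gcd(P,Q) = 1 and |α − P/(4Q)| < 1/(4Q²) is infinite. -/
private lemma finite_bounded_rats (M : ℤ) (N : ℕ) :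
    {q : ℚ | q.den ≤ N ∧ |q.num| ≤ M}.Finite := by
  have hsub : {q : ℚ | q.den ≤ N ∧ |q.num| ≤ M} ⊆
      (fun p : ℤ × ℕ => (p.1 : ℚ) / (p.2 : ℚ)) '' (Set.Icc (-M) M ×ˢ Set.Icc 0 N) := by
    intro q hq
    refine ⟨(q.num, q.den), ⟨?_, ⟨Nat.zero_le _, hq.1⟩⟩, ?_⟩
    · exact abs_le.mp hq.2
    · simpa using q.num_div_den
  exact Set.Finite.subset (Set.Finite.image _
    ((Set.finite_Icc _ _).prod (Set.finite_Icc _ _))) hsub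

private lemma exists_good_rat_large_den {ξ : ℝ} (hξ : Irrational ξ) (N : ℕ) :
    ∃ q : ℚ, |ξ - q| < 1 / (q.den : ℝ) ^ 2 ∧ N < q.den := by
  by_contra hcon
  push_neg at hcon
  have hS := Real.infinite_rat_abs_sub_lt_one_div_den_sq_of_irrational hξ
  apply hS
  apply Set.Finite.subset (finite_bounded_rats ((⌈|ξ|⌉ + 1) * N) N)
  intro q hq
  have hden : q.den ≤ N := hcon q hq
  have hd1 : (1 : ℝ) ≤ (q.den : ℝ) := by exact_mod_cast q.pos
  have hlt : |ξ - q| < 1 := by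
    refine lt_of_lt_of_le hq ?_
    rw [div_le_one (by positivity)]
    nlinarith
  have hqabs : |(q : ℝ)| ≤ |ξ| + 1 := by
    have := abs_sub_abs_le_abs_sub (q : ℝ) ξ
    rw [abs_sub_comm] at this
    linarith
  have hnum : |(q.num : ℝ)| ≤ (|ξ| + 1) * (q.den : ℝ) := by
    have hc : (q : ℝ) = (q.num : ℝ) / (q.den : ℝ) := Rat.cast_def q
    rw [hc, abs_div, abs_of_pos (by positivity : (0:ℝ) < (q.den : ℝ)),
      div_le_iff₀ (by positivity)] at hqabs
    exact hqabs
  refine ⟨hden, ?_⟩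
  have hceil : |ξ| ≤ (⌈|ξ|⌉ : ℝ) := Int.le_ceil _
  have hNr : (q.den : ℝ) ≤ (N : ℝ) := by exact_mod_cast hden
  have hfin : |(q.num : ℝ)| ≤ (((⌈|ξ|⌉ + 1) * N : ℤ) : ℝ) := by
    push_cast
    have h1 : (0:ℝ) ≤ (q.den : ℝ) := by positivity
    have h2 : (0:ℝ) ≤ |ξ| + 1 := by positivity
    calc |(q.num : ℝ)| ≤ (|ξ| + 1) * (q.den : ℝ) := hnum
      _ ≤ ((⌈|ξ|⌉:ℝ) + 1) * (q.den : ℝ) := by nlinarith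
      _ ≤ ((⌈|ξ|⌉:ℝ) + 1) * (N : ℝ) := by nlinarith
  exact_mod_cast hfin

private lemma key_construction {ξ : ℝ} {q' : ℚ} (h : |ξ - q'| < 1 / (q'.den : ℝ) ^ 2)
    (hden : 2 ≤ q'.den) :
    ∃ (a : ℤ) (b : ℕ), Odd a ∧ 1 ≤ b ∧ Int.gcd a (b : ℤ) = 1 ∧
      |ξ - (a : ℝ) / (b : ℝ)| < 1 / (b : ℝ) ^ 2 ∧ |ξ - (a : ℝ) / (b : ℝ)| < 2 / (q'.den : ℝ) := by
  have hco : Int.gcd q'.num (q'.den : ℤ) = 1 := by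
    simpa [Int.gcd, Int.natAbs_natCast] using q'.reduced
  have hQr : (2:ℝ) ≤ (q'.den : ℝ) := by exact_mod_cast hden
  have hQrpos : (0:ℝ) < (q'.den : ℝ) := by linarith
  have hq'cast : (q' : ℝ) = (q'.num : ℝ) / (q'.den : ℝ) := Rat.cast_def q'
  by_cases hodd : Odd q'.num
  · refine ⟨q'.num, q'.den, hodd, q'.pos, hco, ?_, ?_⟩
    · rw [← hq'cast]; exact h
    · rw [← hq'cast]
      refine lt_of_lt_of_le h ?_
      rw [div_le_div_iff₀ (by positivity) (by positivity)]
      nlinarith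
  · set p : ℤ := q'.num with hp
    set q : ℤ := (q'.den : ℤ) with hqdef
    have hq2 : (2:ℤ) ≤ q := by rw [hqdef]; exact_mod_cast hden
    have hpe : Even p := Int.not_odd_iff_even.mp hodd
    have hqodd : Odd q := by
      rw [← Int.not_even_iff_odd]
      intro hqe
      have h2 : (2:ℤ) ∣ (Int.gcd p q : ℤ) :=
        Int.dvd_coe_gcd hpe.two_dvd hqe.two_dvd
      rw [hco] at h2
      norm_num at h2
    obtain ⟨u, v, huv⟩ := Int.isCoprime_iff_gcd_eq_one.mpr hco
    have hqpos : (0:ℤ) < q := by linarith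
    set s₀ : ℤ := u % q with hs₀def
    have hs₀0 : 0 ≤ s₀ := Int.emod_nonneg u (by linarith)
    have hs₀q : s₀ < q := Int.emod_lt_of_pos u hqpos
    have hdvd : q ∣ p * s₀ - 1 := by
      refine ⟨-v - p * (u / q), ?_⟩
      rw [hs₀def, Int.emod_def]
      linear_combination huv
    set r : ℤ := (p * s₀ - 1) / q with hrdef
    have hr : p * s₀ - q * r = 1 := by
      have := Int.ediv_mul_cancel hdvd
      rw [← hrdef] at this
      linarith [this]
    have hs₀pos : 0 < s₀ := by
      rcases hs₀0.eq_or_lt with heq | hlt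
      · exfalso
        rw [← heq] at hr
        have hdvd1 : q ∣ 1 := ⟨-r, by linear_combination -hr⟩
        have := Int.le_of_dvd one_pos hdvd1
        linarith
      · exact hlt
    have hne : 2 * s₀ ≠ q := by
      intro heq
      have : Even q := ⟨s₀, by linarith⟩
      exact (Int.not_odd_iff_even.mpr this) hqodd
    have hoddr : Odd r := by
      have h1 : Odd (q * r) := by
        have he : q * r = p * s₀ - 1 := by linarith
        rw [he]
        exact (hpe.mul_right s₀).sub_odd odd_one
      exact (Int.odd_mul.mp h1).2
    obtain ⟨a, bZ, hoa, hb1, hb2, hdet⟩ :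
        ∃ a bZ : ℤ, Odd a ∧ 1 ≤ bZ ∧ 2 * bZ + 1 ≤ q ∧
          (p * bZ - q * a = 1 ∨ p * bZ - q * a = -1) := by
      rcases lt_or_gt_of_ne hne with hltc | hgt
      · exact ⟨r, s₀, hoddr, by omega, by omega, Or.inl hr⟩
      · exact ⟨p - r, q - s₀, hpe.sub_odd hoddr, by omega, by omega,
          Or.inr (by linear_combination -hr)⟩
    have hbZpos : 0 < bZ := by omega
    have hbZ : ((bZ.toNat : ℤ)) = bZ := Int.toNat_of_nonneg (by omega)
    have hgcd : Int.gcd a ((bZ.toNat : ℕ) : ℤ) = 1 := by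
      rw [hbZ]
      apply Int.isCoprime_iff_gcd_eq_one.mp
      rcases hdet with hd | hd
      · exact ⟨-q, p, by linear_combination hd⟩
      · exact ⟨q, -p, by linear_combination -hd⟩
    have hBr1 : (1:ℝ) ≤ (bZ:ℝ) := by exact_mod_cast hb1
    have hBrpos : (0:ℝ) < (bZ:ℝ) := by linarith
    have hqQr : ((q:ℤ):ℝ) = (q'.den:ℝ) := by rw [hqdef]; push_cast; ring
    have hBQ : 2 * (bZ:ℝ) + 1 ≤ (q'.den:ℝ) := by
      rw [← hqQr]; exact_mod_cast hb2
    have hdetR : |(p:ℝ) * (bZ:ℝ) - (q'.den:ℝ) * (a:ℝ)| = 1 := by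
      have hcast : ((p * bZ - q * a : ℤ) : ℝ) = (p:ℝ)*(bZ:ℝ) - (q'.den:ℝ)*(a:ℝ) := by
        push_cast [← hqQr]
        ring
      rcases hdet with hd | hd
      · rw [← hcast, hd]; norm_num
      · rw [← hcast, hd]; norm_num
    have hdist : |(p:ℝ)/(q'.den:ℝ) - (a:ℝ)/(bZ:ℝ)| = 1 / ((q'.den:ℝ) * (bZ:ℝ)) := by
      rw [div_sub_div _ _ (ne_of_gt hQrpos) (ne_of_gt hBrpos), abs_div,
        abs_of_pos (by positivity : (0:ℝ) < (q'.den:ℝ) * (bZ:ℝ)), hdetR]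
    have h' : |ξ - (p:ℝ)/(q'.den:ℝ)| < 1 / (q'.den:ℝ)^2 := by rw [← hq'cast]; exact h
    have htri : |ξ - (a:ℝ)/(bZ:ℝ)| < 1/(q'.den:ℝ)^2 + 1/((q'.den:ℝ)*(bZ:ℝ)) := by
      calc |ξ - (a:ℝ)/(bZ:ℝ)|
          ≤ |ξ - (p:ℝ)/(q'.den:ℝ)| + |(p:ℝ)/(q'.den:ℝ) - (a:ℝ)/(bZ:ℝ)| := abs_sub_le _ _ _
        _ < 1/(q'.den:ℝ)^2 + 1/((q'.den:ℝ)*(bZ:ℝ)) := by rw [hdist]; linarith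
    have hbR : ((bZ.toNat : ℕ) : ℝ) = (bZ : ℝ) := by exact_mod_cast hbZ
    have hkey : (bZ:ℝ)^2 + (q'.den:ℝ)*(bZ:ℝ) ≤ (q'.den:ℝ)^2 := by
      nlinarith [hBQ, hBr1, hBrpos]
    refine ⟨a, bZ.toNat, hoa, by omega, hgcd, ?_, ?_⟩
    · rw [hbR]
      refine lt_of_lt_of_le htri ?_
      rw [div_add_div _ _ (by positivity) (by positivity),
        div_le_div_iff₀ (by positivity) (by positivity)]
      nlinarith [mul_le_mul_of_nonneg_left hkey
        (le_of_lt (mul_pos hQrpos hBrpos)), hBrpos, hQrpos]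
    · rw [hbR]
      refine lt_of_lt_of_le htri ?_
      rw [div_add_div _ _ (by positivity) (by positivity),
        div_le_div_iff₀ (by positivity) (by positivity)]
      have e1 : (q'.den:ℝ)^3 ≤ (q'.den:ℝ)^3 * (bZ:ℝ) := by
        nlinarith [pow_pos hQrpos 3, hBr1]
      have e0 : (q'.den:ℝ)^2 ≤ (q'.den:ℝ)^3 := by
        nlinarith [hQr]
      have e2 : (q'.den:ℝ)^2 * (bZ:ℝ) ≤ (q'.den:ℝ)^3 * (bZ:ℝ) :=
        mul_le_mul_of_nonneg_right e0 hBrpos.le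
      ring_nf
      ring_nf at e1 e2
      linarith [e1, e2]

/-- For any irrational `α` there are infinitely many fractions `P/(4Q)`
with `P` odd, `Q ≥ 1` and `gcd(P,Q) = 1` such that `|α - P/(4Q)| < 1/(4Q²)`. -/
theorem infinitely_many_odd_approximations (α : ℝ) (hα : Irrational α) :
    {pq : ℤ × ℕ | Odd pq.1 ∧ 1 ≤ pq.2 ∧ Int.gcd pq.1 (pq.2 : ℤ) = 1 ∧
      |α - (pq.1 : ℝ) / (4 * (pq.2 : ℝ))| < 1 / (4 * (pq.2 : ℝ) ^ 2)}.Infinite := by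
  set T := {pq : ℤ × ℕ | Odd pq.1 ∧ 1 ≤ pq.2 ∧ Int.gcd pq.1 (pq.2 : ℤ) = 1 ∧
      |α - (pq.1 : ℝ) / (4 * (pq.2 : ℝ))| < 1 / (4 * (pq.2 : ℝ) ^ 2)} with hT
  have h4α : Irrational (4 * α) := by
    have := hα.natCast_mul (by norm_num : (4:ℕ) ≠ 0)
    simpa using this
  have hpos : ∀ t : ℤ × ℕ, t ∈ T → 0 < |α - (t.1 : ℝ) / (4 * (t.2 : ℝ))| := by
    intro t _
    rw [abs_pos, sub_ne_zero]
    intro he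
    apply hα
    refine ⟨(t.1 : ℚ) / (4 * (t.2 : ℚ)), ?_⟩
    rw [he]; push_cast; ring
  by_contra hfin
  rw [Set.not_infinite] at hfin
  obtain ⟨δ, hδpos, hδ⟩ : ∃ δ : ℝ, 0 < δ ∧ ∀ t ∈ T, δ ≤ |α - (t.1 : ℝ) / (4 * (t.2 : ℝ))| := by
    rcases hfin.toFinset.eq_empty_or_nonempty with hE | hNE
    · refine ⟨1, one_pos, fun t ht => ?_⟩
      exfalso
      have hmem : t ∈ hfin.toFinset := hfin.mem_toFinset.mpr ht
      rw [hE] at hmem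
      exact absurd hmem (Finset.notMem_empty t)
    · refine ⟨hfin.toFinset.inf' hNE (fun t => |α - (t.1 : ℝ) / (4 * (t.2 : ℝ))|), ?_, ?_⟩
      · rw [Finset.lt_inf'_iff]
        intro t ht
        exact hpos t (hfin.mem_toFinset.mp ht)
      · intro t ht
        exact Finset.inf'_le _ (hfin.mem_toFinset.mpr ht)
  obtain ⟨q', hq'1, hq'2⟩ := exists_good_rat_large_den h4α (max 1 ⌈1/δ⌉₊)
  have hden2 : 2 ≤ q'.den := lt_of_le_of_lt (le_max_left _ _) hq'2
  obtain ⟨a, b, hoa, hb1, hgcd, hineq, hsmall⟩ := key_construction hq'1 hden2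
  have hbpos : (0:ℝ) < (b:ℝ) := by exact_mod_cast hb1
  have heq : α - (a : ℝ) / (4 * (b : ℝ)) = (4 * α - (a : ℝ) / (b : ℝ)) / 4 := by
    field_simp
  have hmem : (a, b) ∈ T := by
    refine ⟨hoa, hb1, hgcd, ?_⟩
    show |α - (a : ℝ) / (4 * (b : ℝ))| < 1 / (4 * (b : ℝ) ^ 2)
    rw [heq, abs_div, abs_of_pos (by norm_num : (0:ℝ) < 4),
      div_lt_iff₀ (by norm_num : (0:ℝ) < 4)]
    calc |4 * α - (a:ℝ)/(b:ℝ)| < 1 / (b:ℝ)^2 := hineq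
      _ = 1 / (4 * (b:ℝ)^2) * 4 := by field_simp
  have hQrd : 1/δ < (q'.den : ℝ) := by
    have h1 : ⌈1/δ⌉₊ < q'.den := lt_of_le_of_lt (le_max_right _ _) hq'2
    have h2 : 1/δ ≤ (⌈1/δ⌉₊ : ℝ) := Nat.le_ceil _
    have h3 : ((⌈1/δ⌉₊ : ℕ) : ℝ) < (q'.den : ℝ) := by exact_mod_cast h1
    linarith
  have hQrpos : (0:ℝ) < (q'.den : ℝ) := by positivity
  have hlt2 : 2 / (q'.den : ℝ) < 4 * δ := by
    rw [div_lt_iff₀ hQrpos]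
    rw [div_lt_iff₀ hδpos] at hQrd
    nlinarith
  have hd : |α - (a : ℝ) / (4 * (b : ℝ))| < δ := by
    rw [heq, abs_div, abs_of_pos (by norm_num : (0:ℝ) < 4),
      div_lt_iff₀ (by norm_num : (0:ℝ) < 4)]
    calc |4 * α - (a:ℝ)/(b:ℝ)| < 2 / (q'.den : ℝ) := hsmall
      _ < δ * 4 := by linarith
  exact absurd (hδ (a, b) hmem) (not_le.mpr hd)
end

section
/- Let P be an odd integer and Q a positive integer with gcd(P,Q) = 1, and set α = P/(4Q). The quantum walk generated by the operator CW (coin after shift), started at the origin, is restricted to the interval [-Q,Q]: for every t ∈ ℕ, φ_t(n;L) = φ_t(n;R) = 0 whenever |n| > Q, and moreover φ_t(−Q;L) = φ_t(Q;R) = 0 for all t. -/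
open Real

/-- For `α = P/(4Q)` with `P` odd and `gcd(P,Q) = 1`, the quantum walk
generated by the operator `CW` (coin after shift), started at the origin, is restricted
to the interval `[-Q, Q]`, and moreover `φ_t(-Q;L) = φ_t(Q;R) = 0` for all `t`. -/
theorem cw_qw_restricted (P Q : ℤ) (hP : Odd P) (hQ : 0 < Q)
    (hgcd : Int.gcd P Q = 1) (α : ℝ) (hα : α = (P : ℝ) / (4 * (Q : ℝ)))
    (φL φR : ℕ → ℤ → ℂ) (a b : ℂ)
    (hnorm : ‖a‖ ^ 2 + ‖b‖ ^ 2 = 1)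
    (h0L : φL 0 0 = a) (h0R : φR 0 0 = b)
    (h0 : ∀ n : ℤ, n ≠ 0 → φL 0 n = 0 ∧ φR 0 n = 0)
    (hrecL : ∀ (t : ℕ) (n : ℤ), φL (t + 1) n =
      (Real.cos (2 * π * α * (n : ℝ)) : ℂ) * φL t (n + 1) -
      (Real.sin (2 * π * α * (n : ℝ)) : ℂ) * φR t (n - 1))
    (hrecR : ∀ (t : ℕ) (n : ℤ), φR (t + 1) n =
      (Real.sin (2 * π * α * (n : ℝ)) : ℂ) * φL t (n + 1) +
      (Real.cos (2 * π * α * (n : ℝ)) : ℂ) * φR t (n - 1)) :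
    (∀ (t : ℕ) (n : ℤ), Q < |n| → φL t n = 0 ∧ φR t n = 0) ∧
    (∀ t : ℕ, φL t (-Q) = 0 ∧ φR t Q = 0) := by
  have hQ0 : (Q : ℝ) ≠ 0 := Int.cast_ne_zero.mpr hQ.ne'
  obtain ⟨k, hk⟩ := hP
  have hcosQ : Real.cos (2 * π * α * ((Q : ℤ) : ℝ)) = 0 := by
    apply Real.cos_eq_zero_iff.mpr ⟨k, ?_⟩
    rw [hα, hk]; push_cast; field_simp; ring
  have hcosnQ : Real.cos (2 * π * α * ((-Q : ℤ) : ℝ)) = 0 := by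
    apply Real.cos_eq_zero_iff.mpr ⟨-(k+1), ?_⟩
    rw [hα, hk]; push_cast; field_simp; ring
  have key : ∀ t : ℕ, (∀ n : ℤ, Q < |n| → φL t n = 0 ∧ φR t n = 0) ∧
      (φL t (-Q) = 0 ∧ φR t Q = 0) := by
    intro t
    induction t with
    | zero =>
      refine ⟨fun n hn => h0 n ?_, (h0 (-Q) (by omega)).1, (h0 Q (by omega)).2⟩
      rintro rfl; simp at hn; omega
    | succ t ih =>
      obtain ⟨hout, hbL, hbR⟩ := ih
      refine ⟨?_, ?_, ?_⟩
      · intro n hn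
        have hL : φL t (n + 1) = 0 := by
          rcases lt_abs.mp hn with h | h
          · exact (hout (n+1) (lt_of_lt_of_le (by omega) (le_abs_self _))).1
          · rcases eq_or_lt_of_le (show n + 1 ≤ -Q by omega) with he | hl
            · rw [he]; exact hbL
            · exact (hout (n+1) (by rw [abs_of_neg (by omega)]; omega)).1
        have hR : φR t (n - 1) = 0 := by
          rcases lt_abs.mp hn with h | h
          · rcases eq_or_lt_of_le (show Q ≤ n - 1 by omega) with he | hl
            · rw [← he]; exact hbR
            · exact (hout (n-1) (lt_of_lt_of_le hl (le_abs_self _))).2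
          · exact (hout (n-1) (by rw [abs_of_neg (by omega)]; omega)).2
        rw [hrecL t n, hrecR t n, hL, hR]
        constructor <;> ring
      · rw [hrecL t (-Q)]
        have hR : φR t (-Q - 1) = 0 :=
          (hout _ (by rw [abs_of_neg (by omega)]; omega)).2
        rw [hR, hcosnQ]
        push_cast
        ring
      · rw [hrecR t Q]
        have hL : φL t (Q + 1) = 0 :=
          (hout _ (lt_of_lt_of_le (by omega) (le_abs_self _))).1
        rw [hL, hcosQ]
        push_cast
        ring
  exact ⟨fun t => (key t).1, fun t => (key t).2⟩
end

section
/- Let P be an odd integer and Q a positive integer with gcd(P,Q) = 1. The 4Q-dimensional matrix M = 𝖢𝖶 of the restricted CW walk is unitary: M*M = I on ℂ^I. -/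
open Real Matrix

/-- The index set `I = {(n,ξ) : -Q ≤ n ≤ Q, ξ ∈ {L,R}} \ {(-Q,L),(Q,R)}` of the
restricted `CW` walk, where `false` stands for `L` and `true` for `R`. -/
def Idx (Q : ℤ) : Type :=
  {p : (Finset.Icc (-Q) Q : Finset ℤ) × Bool //
    ¬((p.1 : ℤ) = -Q ∧ p.2 = false) ∧ ¬((p.1 : ℤ) = Q ∧ p.2 = true)}

noncomputable instance (Q : ℤ) : Fintype (Idx Q) := by unfold Idx; infer_instance
instance (Q : ℤ) : DecidableEq (Idx Q) := by unfold Idx; infer_instance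

/-- The `4Q × 4Q` matrix `M = 𝖢𝖶` of the restricted `CW` walk, with
`(Mv)(n,L) = cos θₙ · ṽ(n+1,L) - sin θₙ · ṽ(n-1,R)` and
`(Mv)(n,R) = sin θₙ · ṽ(n+1,L) + cos θₙ · ṽ(n-1,R)`, where `θₙ = πPn/(2Q)`. -/
noncomputable def Mmat (P Q : ℤ) : Matrix (Idx Q) (Idx Q) ℂ := fun i j =>
  if i.1.2 = false then
    (if (j.1.1 : ℤ) = (i.1.1 : ℤ) + 1 ∧ j.1.2 = false then
      (Real.cos (π * (P : ℝ) * ((i.1.1 : ℤ) : ℝ) / (2 * (Q : ℝ))) : ℂ) else 0) +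
    (if (j.1.1 : ℤ) = (i.1.1 : ℤ) - 1 ∧ j.1.2 = true then
      -(Real.sin (π * (P : ℝ) * ((i.1.1 : ℤ) : ℝ) / (2 * (Q : ℝ))) : ℂ) else 0)
  else
    (if (j.1.1 : ℤ) = (i.1.1 : ℤ) + 1 ∧ j.1.2 = false then
      (Real.sin (π * (P : ℝ) * ((i.1.1 : ℤ) : ℝ) / (2 * (Q : ℝ))) : ℂ) else 0) +
    (if (j.1.1 : ℤ) = (i.1.1 : ℤ) - 1 ∧ j.1.2 = true then
      (Real.cos (π * (P : ℝ) * ((i.1.1 : ℤ) : ℝ) / (2 * (Q : ℝ))) : ℂ) else 0)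

namespace CWProof

def ind (Q n : ℤ) (b : Bool) (j : Idx Q) : ℂ :=
  if (j.1.1 : ℤ) = n ∧ j.1.2 = b then 1 else 0

def memI (Q n : ℤ) (b : Bool) : Prop :=
  -Q ≤ n ∧ n ≤ Q ∧ ¬(n = -Q ∧ b = false) ∧ ¬(n = Q ∧ b = true)

instance (Q n : ℤ) (b : Bool) : Decidable (memI Q n b) := by unfold memI; infer_instance

lemma idx_ext {Q : ℤ} {j j' : Idx Q} (h1 : (j.1.1 : ℤ) = (j'.1.1 : ℤ))
    (h2 : j.1.2 = j'.1.2) : j = j' := by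
  obtain ⟨⟨⟨a, ha⟩, b⟩, hc⟩ := j
  obtain ⟨⟨⟨a', ha'⟩, b'⟩, hc'⟩ := j'
  simp_all
  rfl

lemma star_ind (Q n : ℤ) (b : Bool) (j : Idx Q) : star (ind Q n b j) = ind Q n b j := by
  unfold ind; split_ifs <;> simp

lemma conj_ind (Q n : ℤ) (b : Bool) (j : Idx Q) :
    (starRingEnd ℂ) (ind Q n b j) = ind Q n b j := by
  unfold ind; split_ifs <;> simp

lemma sum_ind (Q n : ℤ) (b : Bool) :
    ∑ j : Idx Q, ind Q n b j = if memI Q n b then 1 else 0 := by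
  by_cases hm : memI Q n b
  · rw [if_pos hm]
    obtain ⟨h1, h2, h3, h4⟩ := hm
    have hmem : n ∈ Finset.Icc (-Q) Q := Finset.mem_Icc.mpr ⟨h1, h2⟩
    set j0 : Idx Q := ⟨(⟨n, hmem⟩, b), by exact ⟨h3, h4⟩⟩ with hj0
    rw [Fintype.sum_eq_single j0]
    · simp [ind, j0]
    · intro j hj
      unfold ind
      split_ifs with h
      · exact absurd (idx_ext (by simp [j0, h.1]) (by simp [j0, h.2])) hj
      · rfl
  · simp only [hm, if_false]
    apply Finset.sum_eq_zero
    intro j _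
    unfold ind
    split_ifs with h
    · exfalso
      apply hm
      obtain ⟨hj1, hj2⟩ := h
      have := j.1.1.2
      rw [Finset.mem_Icc] at this
      refine ⟨by omega, by omega, ?_, ?_⟩
      · rw [← hj1, ← hj2]; exact j.2.1
      · rw [← hj1, ← hj2]; exact j.2.2
    · rfl

lemma sum_ind_mul_ind (Q n m : ℤ) (b b' : Bool) :
    ∑ j : Idx Q, ind Q n b j * ind Q m b' j
      = if n = m ∧ b = b' ∧ memI Q n b then 1 else 0 := by
  by_cases h : n = m ∧ b = b'
  · obtain ⟨rfl, rfl⟩ := h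
    have : ∀ j : Idx Q, ind Q n b j * ind Q n b j = ind Q n b j := by
      intro j; unfold ind; split_ifs <;> simp
    simp only [this, sum_ind]
    by_cases hm : memI Q n b <;> simp [hm]
  · rw [if_neg (by tauto)]
    apply Finset.sum_eq_zero
    intro j _
    unfold ind
    split_ifs with h1 h2
    · exact absurd ⟨h1.1.symm.trans h2.1, h1.2.symm.trans h2.2⟩ h
    · simp
    · simp
    · simp


noncomputable def cL (P Q : ℤ) (i : Idx Q) : ℝ :=
  if i.1.2 = false then Real.cos (π * (P : ℝ) * ((i.1.1 : ℤ) : ℝ) / (2 * (Q : ℝ)))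
  else Real.sin (π * (P : ℝ) * ((i.1.1 : ℤ) : ℝ) / (2 * (Q : ℝ)))

noncomputable def cR (P Q : ℤ) (i : Idx Q) : ℝ :=
  if i.1.2 = false then -Real.sin (π * (P : ℝ) * ((i.1.1 : ℤ) : ℝ) / (2 * (Q : ℝ)))
  else Real.cos (π * (P : ℝ) * ((i.1.1 : ℤ) : ℝ) / (2 * (Q : ℝ)))

lemma Mmat_eq (P Q : ℤ) (i j : Idx Q) :
    Mmat P Q i j = (cL P Q i : ℂ) * ind Q ((i.1.1 : ℤ) + 1) false j
      + (cR P Q i : ℂ) * ind Q ((i.1.1 : ℤ) - 1) true j := by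
  unfold Mmat cL cR ind
  split_ifs <;> push_cast <;> ring


lemma entry (P Q : ℤ) (i k : Idx Q) :
    ∑ j : Idx Q, Mmat P Q i j * star (Mmat P Q k j)
      = (if (i.1.1 : ℤ) = (k.1.1 : ℤ) ∧ memI Q ((i.1.1 : ℤ) + 1) false then
          ((cL P Q i : ℂ) * (cL P Q k : ℂ)) else 0)
      + (if (i.1.1 : ℤ) = (k.1.1 : ℤ) ∧ memI Q ((i.1.1 : ℤ) - 1) true then
          ((cR P Q i : ℂ) * (cR P Q k : ℂ)) else 0) := by
  have step : ∀ j : Idx Q, Mmat P Q i j * star (Mmat P Q k j)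
      = ((cL P Q i : ℂ) * (cL P Q k : ℂ)) * (ind Q ((i.1.1:ℤ)+1) false j * ind Q ((k.1.1:ℤ)+1) false j)
      + ((cL P Q i : ℂ) * (cR P Q k : ℂ)) * (ind Q ((i.1.1:ℤ)+1) false j * ind Q ((k.1.1:ℤ)-1) true j)
      + ((cR P Q i : ℂ) * (cL P Q k : ℂ)) * (ind Q ((i.1.1:ℤ)-1) true j * ind Q ((k.1.1:ℤ)+1) false j)
      + ((cR P Q i : ℂ) * (cR P Q k : ℂ)) * (ind Q ((i.1.1:ℤ)-1) true j * ind Q ((k.1.1:ℤ)-1) true j) := by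
    intro j
    rw [Mmat_eq, Mmat_eq]
    simp only [star_add, star_mul', Complex.star_def, map_add, _root_.map_mul,
      Complex.conj_ofReal, conj_ind]
    ring
  simp only [step, Finset.sum_add_distrib, ← Finset.mul_sum]
  rw [sum_ind_mul_ind, sum_ind_mul_ind, sum_ind_mul_ind, sum_ind_mul_ind]
  have e1 : ((i.1.1:ℤ)+1 = (k.1.1:ℤ)+1 ∧ false = false ∧ memI Q ((i.1.1:ℤ)+1) false)
      ↔ ((i.1.1:ℤ) = (k.1.1:ℤ) ∧ memI Q ((i.1.1:ℤ)+1) false) := by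
    constructor
    · rintro ⟨h1, _, h3⟩; exact ⟨by omega, h3⟩
    · rintro ⟨h1, h3⟩; exact ⟨by omega, rfl, h3⟩
  have e4 : ((i.1.1:ℤ)-1 = (k.1.1:ℤ)-1 ∧ true = true ∧ memI Q ((i.1.1:ℤ)-1) true)
      ↔ ((i.1.1:ℤ) = (k.1.1:ℤ) ∧ memI Q ((i.1.1:ℤ)-1) true) := by
    constructor
    · rintro ⟨h1, _, h3⟩; exact ⟨by omega, h3⟩
    · rintro ⟨h1, h3⟩; exact ⟨by omega, rfl, h3⟩
  have c2 : ((i.1.1 : ℤ) + 1 = (k.1.1 : ℤ) - 1 ∧ false = true ∧ memI Q ((i.1.1 : ℤ) + 1) false)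
      ↔ False := by simp
  have c3 : ((i.1.1 : ℤ) - 1 = (k.1.1 : ℤ) + 1 ∧ true = false ∧ memI Q ((i.1.1 : ℤ) - 1) true)
      ↔ False := by simp
  rw [if_congr c2 rfl rfl, if_congr c3 rfl rfl, if_congr e1 rfl rfl, if_congr e4 rfl rfl]
  simp only [mul_ite, mul_one, mul_zero, add_zero, if_false]


lemma memI_succ (Q n : ℤ) (h1 : -Q ≤ n) (h2 : n ≤ Q) :
    memI Q (n + 1) false ↔ n ≠ Q := by
  unfold memI
  constructor
  · rintro ⟨_, hb, _, _⟩ rfl; omega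
  · intro h; refine ⟨by omega, by omega, ?_, ?_⟩
    · rintro ⟨hc, _⟩; omega
    · rintro ⟨_, hc⟩; exact absurd hc (by simp)

lemma memI_pred (Q n : ℤ) (h1 : -Q ≤ n) (h2 : n ≤ Q) :
    memI Q (n - 1) true ↔ n ≠ -Q := by
  unfold memI
  constructor
  · rintro ⟨hb, _, _, _⟩ rfl; omega
  · intro h; refine ⟨by omega, by omega, ?_, ?_⟩
    · rintro ⟨_, hc⟩; exact absurd hc (by simp)
    · rintro ⟨hc, _⟩; omega

lemma cos_bdry (P Q : ℤ) (hP : Odd P) (hQ : 0 < Q) {n : ℤ} (hn : n = Q ∨ n = -Q) :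
    Real.cos (π * (P : ℝ) * (n : ℝ) / (2 * (Q : ℝ))) = 0 := by
  obtain ⟨c, hc⟩ := hP
  have hQ' : (Q : ℝ) ≠ 0 := Int.cast_ne_zero.mpr (by omega)
  have key : Real.cos (π * (P : ℝ) / 2) = 0 := by
    have h : π * (P : ℝ) / 2 = (c : ℝ) * π + π / 2 := by
      have hP' : (P : ℝ) = 2 * c + 1 := by exact_mod_cast congrArg (Int.cast : ℤ → ℝ) hc
      rw [hP']; ring
    rw [h, Real.cos_add, Real.cos_pi_div_two, Real.sin_int_mul_pi, Real.sin_pi_div_two]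
    ring
  rcases hn with h | h
  · rw [h]
    have h2 : π * (P : ℝ) * ((Q : ℤ) : ℝ) / (2 * (Q : ℝ)) = π * (P : ℝ) / 2 := by
      push_cast; field_simp
    rw [h2, key]
  · rw [h]
    have h2 : π * (P : ℝ) * ((-Q : ℤ) : ℝ) / (2 * (Q : ℝ)) = -(π * (P : ℝ) / 2) := by
      push_cast; field_simp
    rw [h2, Real.cos_neg, key]

lemma sin_sq_bdry (P Q : ℤ) (hP : Odd P) (hQ : 0 < Q) {n : ℤ} (hn : n = Q ∨ n = -Q) :
    Real.sin (π * (P : ℝ) * (n : ℝ) / (2 * (Q : ℝ)))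
      * Real.sin (π * (P : ℝ) * (n : ℝ) / (2 * (Q : ℝ))) = 1 := by
  have h0 := cos_bdry P Q hP hQ hn
  have h1 := Real.sin_sq_add_cos_sq (π * (P : ℝ) * (n : ℝ) / (2 * (Q : ℝ)))
  nlinarith [h0, h1]


lemma cL_false (P Q : ℤ) {i : Idx Q} (h : i.1.2 = false) :
    cL P Q i = Real.cos (π * (P : ℝ) * ((i.1.1 : ℤ) : ℝ) / (2 * (Q : ℝ))) := by
  unfold cL; rw [if_pos h]

lemma cL_true (P Q : ℤ) {i : Idx Q} (h : i.1.2 = true) :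
    cL P Q i = Real.sin (π * (P : ℝ) * ((i.1.1 : ℤ) : ℝ) / (2 * (Q : ℝ))) := by
  unfold cL; rw [if_neg (by rw [h]; simp)]

lemma cR_false (P Q : ℤ) {i : Idx Q} (h : i.1.2 = false) :
    cR P Q i = -Real.sin (π * (P : ℝ) * ((i.1.1 : ℤ) : ℝ) / (2 * (Q : ℝ))) := by
  unfold cR; rw [if_pos h]

lemma cR_true (P Q : ℤ) {i : Idx Q} (h : i.1.2 = true) :
    cR P Q i = Real.cos (π * (P : ℝ) * ((i.1.1 : ℤ) : ℝ) / (2 * (Q : ℝ))) := by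
  unfold cR; rw [if_neg (by rw [h]; simp)]

end CWProof

/-- The matrix `M = 𝖢𝖶` of the restricted `CW` walk is unitary. -/
theorem Mmat_unitary (P Q : ℤ) (hP : Odd P) (hQ : 0 < Q) (hgcd : Int.gcd P Q = 1) :
    (Mmat P Q)ᴴ * Mmat P Q = 1 := by
  rw [← mul_eq_one_comm]
  ext i k
  rw [Matrix.mul_apply]
  simp only [Matrix.conjTranspose_apply]
  rw [CWProof.entry, Matrix.one_apply]
  obtain ⟨hi1, hi2⟩ := Finset.mem_Icc.mp i.1.1.2
  obtain ⟨hk1, hk2⟩ := Finset.mem_Icc.mp k.1.1.2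
  by_cases hnm : (i.1.1 : ℤ) = (k.1.1 : ℤ)
  · rw [if_congr (and_congr_right fun _ =>
        CWProof.memI_succ Q ((i.1.1 : ℤ)) hi1 hi2) rfl rfl,
      if_congr (and_congr_right fun _ =>
        CWProof.memI_pred Q ((i.1.1 : ℤ)) hi1 hi2) rfl rfl]
    by_cases hb : i.1.2 = k.1.2
    · have hik : i = k := CWProof.idx_ext hnm hb
      subst hik
      rw [if_pos rfl]
      rcases hbk : i.1.2 with _ | _
      · -- ξ = L : n ≠ -Q
        have hmQ' : (i.1.1 : ℤ) ≠ -Q := fun h => i.2.1 ⟨h, hbk⟩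
        rw [CWProof.cL_false P Q hbk, CWProof.cR_false P Q hbk]
        by_cases hmQ : (i.1.1 : ℤ) = Q
        · rw [if_neg (by tauto), if_pos ⟨rfl, hmQ'⟩, zero_add,
            ← Complex.ofReal_mul, ← Complex.ofReal_one, Complex.ofReal_inj]
          have hs := CWProof.sin_sq_bdry P Q hP hQ (Or.inl hmQ)
          nlinarith [hs]
        · rw [if_pos ⟨rfl, hmQ⟩, if_pos ⟨rfl, hmQ'⟩,
            ← Complex.ofReal_mul, ← Complex.ofReal_mul, ← Complex.ofReal_add,
            ← Complex.ofReal_one, Complex.ofReal_inj]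
          have hs := Real.sin_sq_add_cos_sq (π * (P : ℝ) * (((i.1.1 : ℤ)) : ℝ) / (2 * (Q : ℝ)))
          nlinarith [hs]
      · -- ξ = R : n ≠ Q
        have hmQ : (i.1.1 : ℤ) ≠ Q := fun h => i.2.2 ⟨h, hbk⟩
        rw [CWProof.cL_true P Q hbk, CWProof.cR_true P Q hbk]
        by_cases hmQ' : (i.1.1 : ℤ) = -Q
        · rw [if_pos ⟨rfl, hmQ⟩, if_neg (by tauto), add_zero,
            ← Complex.ofReal_mul, ← Complex.ofReal_one, Complex.ofReal_inj]
          exact CWProof.sin_sq_bdry P Q hP hQ (Or.inr hmQ')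
        · rw [if_pos ⟨rfl, hmQ⟩, if_pos ⟨rfl, hmQ'⟩,
            ← Complex.ofReal_mul, ← Complex.ofReal_mul, ← Complex.ofReal_add,
            ← Complex.ofReal_one, Complex.ofReal_inj]
          have hs := Real.sin_sq_add_cos_sq (π * (P : ℝ) * (((i.1.1 : ℤ)) : ℝ) / (2 * (Q : ℝ)))
          nlinarith [hs]
    · -- bools differ : i ≠ k, cross terms cancel
      have hik : i ≠ k := fun h => hb (by rw [h])
      rw [if_neg hik]
      have hcc : Real.cos (π * (P : ℝ) * (((k.1.1 : ℤ)) : ℝ) / (2 * (Q : ℝ)))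
          = Real.cos (π * (P : ℝ) * (((i.1.1 : ℤ)) : ℝ) / (2 * (Q : ℝ))) := by rw [hnm]
      have hss : Real.sin (π * (P : ℝ) * (((k.1.1 : ℤ)) : ℝ) / (2 * (Q : ℝ)))
          = Real.sin (π * (P : ℝ) * (((i.1.1 : ℤ)) : ℝ) / (2 * (Q : ℝ))) := by rw [hnm]
      by_cases hQbd : (i.1.1 : ℤ) = Q ∨ (i.1.1 : ℤ) = -Q
      · have hc0 : Real.cos (π * (P : ℝ) * (((i.1.1 : ℤ)) : ℝ) / (2 * (Q : ℝ))) = 0 :=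
          CWProof.cos_bdry P Q hP hQ hQbd
        rcases hbi : i.1.2 with _ | _ <;> rcases hbk2 : k.1.2 with _ | _
        · exact absurd (hbi.trans hbk2.symm) hb
        · rw [CWProof.cL_false P Q hbi, CWProof.cR_false P Q hbi,
            CWProof.cL_true P Q hbk2, CWProof.cR_true P Q hbk2, hcc, hss, hc0]
          split_ifs <;> simp
        · rw [CWProof.cL_true P Q hbi, CWProof.cR_true P Q hbi,
            CWProof.cL_false P Q hbk2, CWProof.cR_false P Q hbk2, hcc, hss, hc0]
          split_ifs <;> simp
        · exact absurd (hbi.trans hbk2.symm) hb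
      · push_neg at hQbd
        rw [if_pos ⟨hnm, hQbd.1⟩, if_pos ⟨hnm, hQbd.2⟩]
        rcases hbi : i.1.2 with _ | _ <;> rcases hbk2 : k.1.2 with _ | _
        · exact absurd (hbi.trans hbk2.symm) hb
        · rw [CWProof.cL_false P Q hbi, CWProof.cR_false P Q hbi,
            CWProof.cL_true P Q hbk2, CWProof.cR_true P Q hbk2, hcc, hss]
          push_cast; ring
        · rw [CWProof.cL_true P Q hbi, CWProof.cR_true P Q hbi,
            CWProof.cL_false P Q hbk2, CWProof.cR_false P Q hbk2, hcc, hss]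
          push_cast; ring
        · exact absurd (hbi.trans hbk2.symm) hb
  · have hik : i ≠ k := fun h => hnm (by rw [h])
    simp [hnm, hik]
end

section
/- Let P be an odd integer and Q a positive integer with gcd(P,Q) = 1. The determinant of the 4Q-dimensional matrix M = 𝖢𝖶 of the restricted CW walk equals −1; equivalently, the product of the 4Q eigenvalues of M (with multiplicity) equals −1. -/
open Real Matrix

namespace CWaux
variable {Q : ℤ}
lemma idx_ext {x y : Idx Q} (h1 : (x.1.1 : ℤ) = (y.1.1 : ℤ)) (h2 : x.1.2 = y.1.2) : x = y :=
  Subtype.ext (Prod.ext (Subtype.ext h1) h2)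
lemma idx_bounds (x : Idx Q) : -Q ≤ (x.1.1 : ℤ) ∧ (x.1.1 : ℤ) ≤ Q :=
  Finset.mem_Icc.1 x.1.1.2
def mk (Q n : ℤ) (b : Bool) (h1 : -Q ≤ n) (h2 : n ≤ Q)
    (h3 : ¬(n = -Q ∧ b = false)) (h4 : ¬(n = Q ∧ b = true)) : Idx Q :=
  ⟨⟨⟨n, Finset.mem_Icc.2 ⟨h1, h2⟩⟩, b⟩, ⟨h3, h4⟩⟩
@[simp] lemma mk_n (Q n : ℤ) (b : Bool) (h1 h2 h3 h4) :
    ((mk Q n b h1 h2 h3 h4).1.1 : ℤ) = n := rfl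
@[simp] lemma mk_b (Q n : ℤ) (b : Bool) (h1 h2 h3 h4) :
    (mk Q n b h1 h2 h3 h4).1.2 = b := rfl

lemma boundL (hQ : 0 < Q) (x : Idx Q) : (Q - (x.1.1 : ℤ)).toNat < 4 * Q.toNat - 1 + 1 := by
  have h := idx_bounds x; omega
lemma boundR (hQ : 0 < Q) (x : Idx Q) (hb : x.1.2 = true) :
    ((x.1.1 : ℤ) + 3 * Q).toNat < 4 * Q.toNat - 1 + 1 := by
  have h := idx_bounds x
  have h4 : ¬((x.1.1 : ℤ) = Q ∧ x.1.2 = true) := x.2.2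
  rw [hb] at h4
  have : (x.1.1 : ℤ) ≠ Q := fun hh => h4 ⟨hh, rfl⟩
  omega

/-- number the index set along the big cycle -/
def toIdx (Q : ℤ) (hQ : 0 < Q) (k : Fin (4 * Q.toNat - 1 + 1)) : Idx Q :=
  if h : (k : ℤ) < 2 * Q then
    mk Q (Q - (k : ℤ)) false (by have := k.isLt; omega) (by omega)
      (by rintro ⟨h1, -⟩; omega) (by rintro ⟨-, h2⟩; simp at h2)
  else
    mk Q ((k : ℤ) - 3 * Q) true (by omega) (by have := k.isLt; omega)
      (by rintro ⟨-, h2⟩; simp at h2) (by rintro ⟨h1, -⟩; have := k.isLt; omega)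

def ofIdx (Q : ℤ) (hQ : 0 < Q) (x : Idx Q) : Fin (4 * Q.toNat - 1 + 1) :=
  if hb : x.1.2 = false then
    ⟨(Q - (x.1.1 : ℤ)).toNat, boundL hQ x⟩
  else
    ⟨((x.1.1 : ℤ) + 3 * Q).toNat, boundR hQ x (by revert hb; cases x.1.2 <;> simp)⟩

def idxEquiv (Q : ℤ) (hQ : 0 < Q) : Fin (4 * Q.toNat - 1 + 1) ≃ Idx Q where
  toFun := toIdx Q hQ
  invFun := ofIdx Q hQ
  left_inv k := by
    have hk := k.isLt
    unfold toIdx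
    split_ifs with h
    · simp only [ofIdx, mk_b, mk_n]
      refine (dif_pos rfl).trans (Fin.ext ?_)
      show (Q - (Q - ((k : ℕ) : ℤ))).toNat = (k : ℕ)
      omega
    · simp only [ofIdx, mk_b, mk_n]
      refine (dif_neg (by decide)).trans (Fin.ext ?_)
      show (((k : ℕ) : ℤ) - 3 * Q + 3 * Q).toNat = (k : ℕ)
      omega
  right_inv x := by
    obtain ⟨h1, h2⟩ := idx_bounds x
    have h3 := x.2.1
    have h4 := x.2.2
    unfold ofIdx
    split_ifs with hb
    · have hne : (x.1.1 : ℤ) ≠ -Q := fun hh => h3 ⟨hh, hb⟩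
      unfold toIdx
      rw [dif_pos (by simp only [Fin.val_mk]; omega)]
      apply idx_ext
      · simp only [mk_n, Fin.val_mk]; omega
      · simp [hb, mk_b]
    · have hbt : x.1.2 = true := by simpa using hb
      have hne : (x.1.1 : ℤ) ≠ Q := fun hh => h4 ⟨hh, hbt⟩
      unfold toIdx
      rw [dif_neg (by simp only [Fin.val_mk]; omega)]
      apply idx_ext
      · simp only [mk_n, Fin.val_mk]; omega
      · simp [hbt, mk_b]

/-- angle -/
noncomputable def ang (P Q n : ℤ) : ℝ := π * (P : ℝ) * (n : ℝ) / (2 * (Q : ℝ))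

/-- the block-rotation matrix -/
noncomputable def Rmat (P Q : ℤ) : Matrix (Idx Q) (Idx Q) ℂ := fun i k =>
  if (i.1.1 : ℤ) = Q then
    (if (k.1.1 : ℤ) = Q ∧ k.1.2 = false then -((Real.sin (ang P Q Q) : ℝ) : ℂ) else 0)
  else if (i.1.1 : ℤ) = -Q then
    (if (k.1.1 : ℤ) = -Q ∧ k.1.2 = true then ((Real.sin (ang P Q (-Q)) : ℝ) : ℂ) else 0)
  else if (k.1.1 : ℤ) = (i.1.1 : ℤ) then
    (if i.1.2 = false then
      (if k.1.2 = false then ((Real.cos (ang P Q (i.1.1 : ℤ)) : ℝ) : ℂ)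
       else -((Real.sin (ang P Q (i.1.1 : ℤ)) : ℝ) : ℂ))
     else
      (if k.1.2 = false then ((Real.sin (ang P Q (i.1.1 : ℤ)) : ℝ) : ℂ)
       else ((Real.cos (ang P Q (i.1.1 : ℤ)) : ℝ) : ℂ)))
  else 0

/-- the big cycle on the index set -/
def cyc (Q : ℤ) (hQ : 0 < Q) : Equiv.Perm (Idx Q) :=
  (idxEquiv Q hQ).permCongr (finRotate (4 * Q.toNat - 1 + 1))

lemma toIdx_spec (Q : ℤ) (hQ : 0 < Q) (k : Fin (4 * Q.toNat - 1 + 1)) :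
    (((toIdx Q hQ k).1.1 : ℤ), (toIdx Q hQ k).1.2) =
      if (k : ℤ) < 2 * Q then (Q - (k : ℤ), false) else ((k : ℤ) - 3 * Q, true) := by
  unfold toIdx
  split_ifs with h <;> simp

lemma ofIdx_val (Q : ℤ) (hQ : 0 < Q) (x : Idx Q) :
    ((ofIdx Q hQ x : ℕ) : ℤ) =
      if x.1.2 = false then Q - (x.1.1 : ℤ) else (x.1.1 : ℤ) + 3 * Q := by
  have hb := idx_bounds x
  unfold ofIdx
  split_ifs with h <;> simp only [Fin.val_mk] <;>
    exact Int.toNat_of_nonneg (by omega)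

lemma rot_val (m : ℕ) (i : Fin (m + 1)) :
    ((finRotate (m + 1) i : Fin (m + 1)) : ℕ) = if (i : ℕ) = m then 0 else (i : ℕ) + 1 := by
  rw [coe_finRotate]
  by_cases h : i = Fin.last m
  · rw [if_pos h, if_pos (by rw [h]; rfl)]
  · rw [if_neg h, if_neg (by rw [Fin.ext_iff, Fin.val_last] at h; exact h)]

lemma cyc_spec (Q : ℤ) (hQ : 0 < Q) (j : Idx Q) :
    ((((cyc Q hQ j).1.1 : ℤ), (cyc Q hQ j).1.2) =
      if j.1.2 = false then
        (if (j.1.1 : ℤ) = -Q + 1 then ((-Q : ℤ), true) else ((j.1.1 : ℤ) - 1, false))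
      else
        (if (j.1.1 : ℤ) = Q - 1 then ((Q : ℤ), false) else ((j.1.1 : ℤ) + 1, true))) := by
  obtain ⟨h1, h2⟩ := idx_bounds j
  have h3 := j.2.1
  have h4 := j.2.2
  have hEq : (cyc Q hQ) j = toIdx Q hQ (finRotate _ (ofIdx Q hQ j)) := rfl
  rw [hEq, toIdx_spec]
  have hv := ofIdx_val Q hQ j
  have hlt := (ofIdx Q hQ j).isLt
  have hr := rot_val _ (ofIdx Q hQ j)
  rcases hb : j.1.2 with _ | _ <;> rw [hb] at hv h3 h4 <;>
    simp only [Bool.true_eq_false, eq_self_iff_true, if_true, if_false] at hv ⊢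
  · -- b = false
    have hne : (j.1.1 : ℤ) ≠ -Q := fun hh => h3 ⟨hh, rfl⟩
    have hlast : ¬((ofIdx Q hQ j : ℕ) = 4 * Q.toNat - 1) := by omega
    rw [if_neg hlast] at hr
    by_cases hc : (j.1.1 : ℤ) = -Q + 1
    · rw [if_pos hc, if_neg (by push_cast [hr]; omega)]
      refine Prod.ext ?_ rfl
      push_cast [hr]; omega
    · rw [if_neg hc, if_pos (by push_cast [hr]; omega)]
      refine Prod.ext ?_ rfl
      push_cast [hr]; omega
  · -- b = true
    have hne : (j.1.1 : ℤ) ≠ Q := fun hh => h4 ⟨hh, rfl⟩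
    by_cases hc : (j.1.1 : ℤ) = Q - 1
    · have hlast : (ofIdx Q hQ j : ℕ) = 4 * Q.toNat - 1 := by omega
      rw [if_pos hlast] at hr
      rw [if_pos hc, if_pos (by push_cast [hr]; omega)]
      refine Prod.ext ?_ rfl
      push_cast [hr]; omega
    · have hlast : ¬((ofIdx Q hQ j : ℕ) = 4 * Q.toNat - 1) := by omega
      rw [if_neg hlast] at hr
      rw [if_neg hc, if_neg (by push_cast [hr]; omega)]
      refine Prod.ext ?_ rfl
      push_cast [hr]; omega

noncomputable def Mmat' (P Q : ℤ) : Matrix (Idx Q) (Idx Q) ℂ := fun i j =>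
  if i.1.2 = false then
    (if (j.1.1 : ℤ) = (i.1.1 : ℤ) + 1 ∧ j.1.2 = false then
      ((Real.cos (ang P Q (i.1.1 : ℤ)) : ℝ) : ℂ) else 0) +
    (if (j.1.1 : ℤ) = (i.1.1 : ℤ) - 1 ∧ j.1.2 = true then
      -((Real.sin (ang P Q (i.1.1 : ℤ)) : ℝ) : ℂ) else 0)
  else
    (if (j.1.1 : ℤ) = (i.1.1 : ℤ) + 1 ∧ j.1.2 = false then
      ((Real.sin (ang P Q (i.1.1 : ℤ)) : ℝ) : ℂ) else 0) +
    (if (j.1.1 : ℤ) = (i.1.1 : ℤ) - 1 ∧ j.1.2 = true then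
      ((Real.cos (ang P Q (i.1.1 : ℤ)) : ℝ) : ℂ) else 0)

lemma Mmat'_eq (P Q : ℤ) (hQ : 0 < Q) :
    Mmat' P Q = (Rmat P Q).submatrix id (cyc Q hQ) := by
  ext i j
  obtain ⟨hi1, hi2⟩ := idx_bounds i
  obtain ⟨hj1, hj2⟩ := idx_bounds j
  have hi3 := i.2.1
  have hi4 := i.2.2
  have hj3 := j.2.1
  have hj4 := j.2.2
  have hs := cyc_spec Q hQ j
  simp only [Mmat', Rmat, Matrix.submatrix_apply, id_eq]
  rcases hib : i.1.2 with _ | _ <;> rcases hjb : j.1.2 with _ | _ <;>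
      rw [hib] at hi3 hi4 <;> rw [hjb] at hj3 hj4 hs <;>
      simp only [Bool.true_eq_false, Bool.false_eq_true, eq_self_iff_true, and_true,
        and_false, if_true, if_false] at hs ⊢
  · -- i : L, j : L
    have hi' : (i.1.1 : ℤ) ≠ -Q := fun hh => hi3 ⟨hh, rfl⟩
    by_cases hc : (j.1.1 : ℤ) = -Q + 1 <;>
      [rw [if_pos hc] at hs; rw [if_neg hc] at hs] <;>
      rw [Prod.mk.injEq] at hs <;> obtain ⟨hs1, hs2⟩ := hs <;>
      rw [hs1, hs2] <;>
      simp only [Bool.true_eq_false, Bool.false_eq_true, eq_self_iff_true, and_true,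
        and_false, if_true, if_false] <;>
      split_ifs <;>
      first
        | (exfalso; omega)
        | (norm_num; done)
        | (rw [show ((i.1.1 : ℤ)) = Q from by omega]; norm_num; done)
        | (rw [show ((i.1.1 : ℤ)) = -Q from by omega]; norm_num; done)
  · -- i : L, j : R
    have hi' : (i.1.1 : ℤ) ≠ -Q := fun hh => hi3 ⟨hh, rfl⟩
    by_cases hc : (j.1.1 : ℤ) = Q - 1 <;>
      [rw [if_pos hc] at hs; rw [if_neg hc] at hs] <;>
      rw [Prod.mk.injEq] at hs <;> obtain ⟨hs1, hs2⟩ := hs <;>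
      rw [hs1, hs2] <;>
      simp only [Bool.true_eq_false, Bool.false_eq_true, eq_self_iff_true, and_true,
        and_false, if_true, if_false] <;>
      split_ifs <;>
      first
        | (exfalso; omega)
        | (norm_num; done)
        | (rw [show ((i.1.1 : ℤ)) = Q from by omega]; norm_num; done)
        | (rw [show ((i.1.1 : ℤ)) = -Q from by omega]; norm_num; done)
  · -- i : R, j : L
    have hi' : (i.1.1 : ℤ) ≠ Q := fun hh => hi4 ⟨hh, rfl⟩
    by_cases hc : (j.1.1 : ℤ) = -Q + 1 <;>
      [rw [if_pos hc] at hs; rw [if_neg hc] at hs] <;>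
      rw [Prod.mk.injEq] at hs <;> obtain ⟨hs1, hs2⟩ := hs <;>
      rw [hs1, hs2] <;>
      simp only [Bool.true_eq_false, Bool.false_eq_true, eq_self_iff_true, and_true,
        and_false, if_true, if_false] <;>
      split_ifs <;>
      first
        | (exfalso; omega)
        | (norm_num; done)
        | (rw [show ((i.1.1 : ℤ)) = Q from by omega]; norm_num; done)
        | (rw [show ((i.1.1 : ℤ)) = -Q from by omega]; norm_num; done)
  · -- i : R, j : R
    have hi' : (i.1.1 : ℤ) ≠ Q := fun hh => hi4 ⟨hh, rfl⟩
    by_cases hc : (j.1.1 : ℤ) = Q - 1 <;>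
      [rw [if_pos hc] at hs; rw [if_neg hc] at hs] <;>
      rw [Prod.mk.injEq] at hs <;> obtain ⟨hs1, hs2⟩ := hs <;>
      rw [hs1, hs2] <;>
      simp only [Bool.true_eq_false, Bool.false_eq_true, eq_self_iff_true, and_true,
        and_false, if_true, if_false] <;>
      split_ifs <;>
      first
        | (exfalso; omega)
        | (norm_num; done)
        | (rw [show ((i.1.1 : ℤ)) = Q from by omega]; norm_num; done)
        | (rw [show ((i.1.1 : ℤ)) = -Q from by omega]; norm_num; done)

set_option maxHeartbeats 2000000 in
/-- block structure equiv -/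
def blkEquiv (Q : ℤ) (hQ : 0 < Q) : Idx Q ≃ (Fin 2 × {z : ℤ // z ∈ Finset.Icc (-Q + 1) Q}) where
  toFun x := (if x.1.2 = false then 0 else 1,
    ⟨if (x.1.1 : ℤ) = -Q then Q else (x.1.1 : ℤ), by
      have h := idx_bounds x
      split_ifs with h' <;> rw [Finset.mem_Icc] <;> omega⟩)
  invFun p :=
    if p.1 = 0 then
      mk Q (p.2 : ℤ) false (by have := Finset.mem_Icc.1 p.2.2; omega)
        (by have := Finset.mem_Icc.1 p.2.2; omega)
        (by have := Finset.mem_Icc.1 p.2.2; rintro ⟨h1, -⟩; omega)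
        (by rintro ⟨-, h2⟩; simp at h2)
    else if hz : (p.2 : ℤ) = Q then
      mk Q (-Q) true (le_refl _) (by omega) (by rintro ⟨-, h2⟩; simp at h2)
        (by rintro ⟨h1, -⟩; omega)
    else
      mk Q (p.2 : ℤ) true (by have := Finset.mem_Icc.1 p.2.2; omega)
        (by have := Finset.mem_Icc.1 p.2.2; omega)
        (by rintro ⟨-, h2⟩; simp at h2)
        (by rintro ⟨h1, -⟩; omega)
  left_inv x := by
    obtain ⟨h1, h2⟩ := idx_bounds x
    have h3 := x.2.1
    have h4 := x.2.2
    rcases hb : x.1.2 with _ | _ <;> rw [hb] at h3 h4 <;>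
      simp only [hb, Bool.true_eq_false, eq_self_iff_true, if_true, if_false]
    · have hne : (x.1.1 : ℤ) ≠ -Q := fun hh => h3 ⟨hh, rfl⟩
      apply idx_ext
      · simp only [mk_n]; rw [if_neg hne]
      · rw [mk_b, hb]
    · rw [if_neg (by decide : ¬((1 : Fin 2) = 0))]
      by_cases hxq : (x.1.1 : ℤ) = -Q
      · rw [dif_pos (show (if (x.1.1 : ℤ) = -Q then Q else (x.1.1 : ℤ)) = Q by
          rw [if_pos hxq])]
        apply idx_ext
        · simp only [mk_n]; omega
        · rw [mk_b, hb]
      · have hQne : (x.1.1 : ℤ) ≠ Q := fun hh => h4 ⟨hh, rfl⟩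
        rw [dif_neg (show ¬((if (x.1.1 : ℤ) = -Q then Q else (x.1.1 : ℤ)) = Q) by
          rw [if_neg hxq]; exact hQne)]
        apply idx_ext
        · simp only [mk_n]; rw [if_neg hxq]
        · rw [mk_b, hb]
  right_inv p := by
    obtain ⟨f, z⟩ := p
    obtain ⟨hz1, hz2⟩ := Finset.mem_Icc.1 z.2
    dsimp only
    by_cases hf : f = 0
    · rw [if_pos hf]
      refine Prod.ext ?_ ?_
      · simp only [mk_b]; rw [if_pos trivial, hf]
      · apply Subtype.ext
        simp only [mk_n]
        exact if_neg (by omega)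
    · have hf1 : f = 1 := by
        have hlt := f.isLt
        rw [Fin.ext_iff] at hf ⊢
        simp only [Fin.val_zero, Fin.val_one] at hf ⊢
        omega
      rw [if_neg hf]
      by_cases hzq : (z : ℤ) = Q
      · rw [dif_pos hzq]
        refine Prod.ext ?_ ?_
        · simp only [mk_b]
          simp [hf1]
        · apply Subtype.ext
          simp only [mk_n]
          rw [if_pos trivial, hzq]
      · rw [dif_neg hzq]
        refine Prod.ext ?_ ?_
        · simp only [mk_b]
          simp [hf1]
        · apply Subtype.ext
          simp only [mk_n]
          exact if_neg (by omega)

/-- the 2×2 blocks -/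
noncomputable def blk (P Q : ℤ) (z : {z : ℤ // z ∈ Finset.Icc (-Q + 1) Q}) :
    Matrix (Fin 2) (Fin 2) ℂ :=
  if (z : ℤ) = Q then
    !![-((Real.sin (ang P Q Q) : ℝ) : ℂ), 0; 0, ((Real.sin (ang P Q (-Q)) : ℝ) : ℂ)]
  else
    !![((Real.cos (ang P Q (z : ℤ)) : ℝ) : ℂ), -((Real.sin (ang P Q (z : ℤ)) : ℝ) : ℂ);
       ((Real.sin (ang P Q (z : ℤ)) : ℝ) : ℂ), ((Real.cos (ang P Q (z : ℤ)) : ℝ) : ℂ)]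

set_option maxHeartbeats 2000000 in
lemma Rmat_blockDiag (P Q : ℤ) (hQ : 0 < Q) (x y : Idx Q) :
    Rmat P Q x y =
      Matrix.blockDiagonal (blk P Q) (blkEquiv Q hQ x) (blkEquiv Q hQ y) := by
  obtain ⟨hx1, hx2⟩ := idx_bounds x
  obtain ⟨hy1, hy2⟩ := idx_bounds y
  have hx3 := x.2.1
  have hx4 := x.2.2
  have hy3 := y.2.1
  have hy4 := y.2.2
  rcases hxb : x.1.2 with _ | _ <;> rcases hyb : y.1.2 with _ | _ <;>
    rw [hxb] at hx3 hx4 <;> rw [hyb] at hy3 hy4 <;>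
    simp only [Bool.true_eq_false, Bool.false_eq_true, eq_self_iff_true, and_true,
      and_false, not_false_iff] at hx3 hx4 hy3 hy4 <;>
    simp only [Rmat, blkEquiv, Equiv.coe_fn_mk, Matrix.blockDiagonal_apply, blk, hxb, hyb,
      Bool.true_eq_false, Bool.false_eq_true, eq_self_iff_true, if_true, if_false,
      and_true, and_false, Subtype.mk.injEq] <;>
    split_ifs <;>
    first
      | (exfalso; omega)
      | (norm_num; done)
      | (rw [show ((x.1.1 : ℤ)) = Q from by omega]; norm_num; done)
      | (rw [show ((x.1.1 : ℤ)) = -Q from by omega]; norm_num; done)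
      | (rw [show ((x.1.1 : ℤ)) = (y.1.1 : ℤ) from by omega]; norm_num; done)
      | (rw [show ((y.1.1 : ℤ)) = (x.1.1 : ℤ) from by omega]; norm_num; done)
      | (simp only [show ((x.1.1 : ℤ)) = Q from by omega, show ((y.1.1 : ℤ)) = -Q from by omega]; norm_num; done)
      | (simp only [show ((x.1.1 : ℤ)) = -Q from by omega, show ((y.1.1 : ℤ)) = Q from by omega]; norm_num; done)

lemma Rmat_reindex (P Q : ℤ) (hQ : 0 < Q) :
    Matrix.reindex (blkEquiv Q hQ) (blkEquiv Q hQ) (Rmat P Q) =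
      Matrix.blockDiagonal (blk P Q) := by
  ext p q
  rw [Matrix.reindex_apply, Matrix.submatrix_apply, Rmat_blockDiag P Q hQ,
    Equiv.apply_symm_apply, Equiv.apply_symm_apply]

lemma cos_angQ (P Q : ℤ) (hP : Odd P) (hQ : 0 < Q) : Real.cos (ang P Q Q) = 0 := by
  obtain ⟨k, hk⟩ := hP
  have hQ0 : (Q : ℝ) ≠ 0 := Int.cast_ne_zero.2 (by omega)
  rw [Real.cos_eq_zero_iff]
  refine ⟨k, ?_⟩
  unfold ang
  subst hk
  push_cast
  field_simp

lemma det_blk (P Q : ℤ) (hP : Odd P) (hQ : 0 < Q)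
    (z : {z : ℤ // z ∈ Finset.Icc (-Q + 1) Q}) : (blk P Q z).det = 1 := by
  unfold blk
  split_ifs with hz
  · rw [Matrix.det_fin_two_of]
    have h1 : ang P Q (-Q) = -(ang P Q Q) := by unfold ang; push_cast; ring
    have h2 := Real.sin_sq_add_cos_sq (ang P Q Q)
    rw [cos_angQ P Q hP hQ] at h2
    have h3 : Real.sin (ang P Q Q) ^ 2 = 1 := by nlinarith [h2]
    rw [h1, Real.sin_neg]
    have h4 : -((Real.sin (ang P Q Q) : ℝ) : ℂ) * ((-Real.sin (ang P Q Q) : ℝ) : ℂ) -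
        0 * 0 = ((Real.sin (ang P Q Q) ^ 2 : ℝ) : ℂ) := by push_cast; ring
    rw [h4, h3]
    norm_num
  · rw [Matrix.det_fin_two_of]
    have h2 := Real.sin_sq_add_cos_sq (ang P Q (z : ℤ))
    have h4 : ((Real.cos (ang P Q (z : ℤ)) : ℝ) : ℂ) * ((Real.cos (ang P Q (z : ℤ)) : ℝ) : ℂ) -
        -((Real.sin (ang P Q (z : ℤ)) : ℝ) : ℂ) * ((Real.sin (ang P Q (z : ℤ)) : ℝ) : ℂ) =
        ((Real.sin (ang P Q (z : ℤ)) ^ 2 + Real.cos (ang P Q (z : ℤ)) ^ 2 : ℝ) : ℂ) := by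
      push_cast; ring
    rw [h4, h2]
    norm_num

lemma det_Rmat (P Q : ℤ) (hP : Odd P) (hQ : 0 < Q) : (Rmat P Q).det = 1 := by
  rw [← Matrix.det_reindex_self (blkEquiv Q hQ) (Rmat P Q), Rmat_reindex P Q hQ,
    Matrix.det_blockDiagonal]
  exact Finset.prod_eq_one fun z _ => det_blk P Q hP hQ z

end CWaux

/-- The determinant of the matrix `M = 𝖢𝖶` of the restricted `CW` walk
(equivalently, the product of its `4Q` eigenvalues with multiplicity) equals `-1`. -/
theorem Mmat_det (P Q : ℤ) (hP : Odd P) (hQ : 0 < Q) (hgcd : Int.gcd P Q = 1) :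
    (Mmat P Q).det = -1 := by
  have h0 : Mmat P Q = CWaux.Mmat' P Q := rfl
  rw [h0, CWaux.Mmat'_eq P Q hQ, Matrix.det_permute', CWaux.det_Rmat P Q hP hQ, mul_one]
  have hsign : Equiv.Perm.sign (CWaux.cyc Q hQ) = -1 := by
    rw [CWaux.cyc, Equiv.Perm.sign_permCongr, sign_finRotate]
    exact Odd.neg_one_pow (Nat.odd_iff.2 (by omega))
  rw [hsign]
  simp
end

section
/- Let Q be a positive integer, let P be an odd integer with gcd(P,Q) = 1, and write M_P for the 4Q-dimensional matrix of the restricted CW walk with parameter P. Then the eigenvalues of M_P at inverse period α = P/(4Q) are identical to those at inverse period 1 − α: a complex number λ is an eigenvalue of M_P if and only if λ is an eigenvalue of M_{4Q−P}. -/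
open Real Matrix

/-- Sign function used for the diagonal similarity: `+1` on `L`, `-1` on `R`. -/
noncomputable def sgn (Q : ℤ) (i : Idx Q) : ℂ := if i.1.2 then -1 else 1

lemma sgn_mul_self (Q : ℤ) (i : Idx Q) : sgn Q i * sgn Q i = 1 := by
  unfold sgn; split_ifs <;> norm_num

lemma sgn_ne_zero (Q : ℤ) (i : Idx Q) : sgn Q i ≠ 0 := by
  unfold sgn; split_ifs <;> norm_num

lemma Mmat_entry (P Q : ℤ) (hQ : (Q : ℝ) ≠ 0) (i j : Idx Q) :
    Mmat (4 * Q - P) Q i j = sgn Q i * sgn Q j * Mmat P Q i j := by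
  set n : ℝ := ((i.1.1 : ℤ) : ℝ) with hn
  have hang : π * ((4 * Q - P : ℤ) : ℝ) * n / (2 * (Q : ℝ))
      = (i.1.1 : ℤ) * (2 * π) - π * (P : ℝ) * n / (2 * (Q : ℝ)) := by
    push_cast
    field_simp
    ring
  have hc : Real.cos (π * ((4 * Q - P : ℤ) : ℝ) * n / (2 * (Q : ℝ)))
      = Real.cos (π * (P : ℝ) * n / (2 * (Q : ℝ))) := by
    rw [hang, Real.cos_int_mul_two_pi_sub]
  have hs : Real.sin (π * ((4 * Q - P : ℤ) : ℝ) * n / (2 * (Q : ℝ)))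
      = -Real.sin (π * (P : ℝ) * n / (2 * (Q : ℝ))) := by
    rw [hang, Real.sin_int_mul_two_pi_sub]
  unfold Mmat sgn
  rcases hbi : i.1.2 <;> rcases hbj : j.1.2 <;>
    simp only [hbi, hbj, ← hn, hc, hs, if_true, if_false, Bool.true_eq_false,
      Bool.false_eq_true, and_true, and_false, Complex.ofReal_neg] <;>
    split_ifs <;> ring

lemma eigen_transfer (P Q : ℤ) (hQ : (Q : ℝ) ≠ 0) (lam : ℂ)
    (h : ∃ v : Idx Q → ℂ, v ≠ 0 ∧ (Mmat P Q).mulVec v = lam • v) :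
    ∃ v : Idx Q → ℂ, v ≠ 0 ∧ (Mmat (4 * Q - P) Q).mulVec v = lam • v := by
  obtain ⟨v, hv0, hv⟩ := h
  refine ⟨fun i => sgn Q i * v i, ?_, ?_⟩
  · intro h0
    apply hv0
    funext i
    have := congrFun h0 i
    simp only [Pi.zero_apply, mul_eq_zero] at this ⊢
    rcases this with h | h
    · exact absurd h (sgn_ne_zero Q i)
    · exact h
  · funext i
    have hvi := congrFun hv i
    simp only [mulVec, dotProduct, Pi.smul_apply, smul_eq_mul] at hvi ⊢
    calc ∑ j, Mmat (4 * Q - P) Q i j * (sgn Q j * v j)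
        = ∑ j, sgn Q i * (Mmat P Q i j * v j) := by
          refine Finset.sum_congr rfl fun j _ => ?_
          rw [Mmat_entry P Q hQ i j]
          have := sgn_mul_self Q j
          calc sgn Q i * sgn Q j * Mmat P Q i j * (sgn Q j * v j)
              = sgn Q i * (Mmat P Q i j * v j) * (sgn Q j * sgn Q j) := by ring
            _ = sgn Q i * (Mmat P Q i j * v j) := by rw [this, mul_one]
      _ = sgn Q i * ∑ j, Mmat P Q i j * v j := by rw [Finset.mul_sum]
      _ = sgn Q i * (lam * v i) := by rw [hvi]
      _ = lam * (sgn Q i * v i) := by ring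

/-- The eigenvalues of the restricted `CW` walk matrix at inverse period
`α = P/(4Q)` coincide with those at inverse period `1 - α = (4Q - P)/(4Q)`. -/
theorem Mmat_spectrum_symm (P Q : ℤ) (hP : Odd P) (hQ : 0 < Q) (hgcd : Int.gcd P Q = 1)
    (lam : ℂ) :
    (∃ v : Idx Q → ℂ, v ≠ 0 ∧ (Mmat P Q).mulVec v = lam • v) ↔
    (∃ v : Idx Q → ℂ, v ≠ 0 ∧ (Mmat (4 * Q - P) Q).mulVec v = lam • v) := by
  have hQ' : (Q : ℝ) ≠ 0 := by
    exact_mod_cast (ne_of_gt (by exact_mod_cast hQ : (0:ℝ) < (Q:ℝ)))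
  constructor
  · exact eigen_transfer P Q hQ' lam
  · intro h
    have := eigen_transfer (4 * Q - P) Q hQ' lam h
    rwa [show 4 * Q - (4 * Q - P) = P by ring] at this
end

section
/- Let P be an odd integer and Q a positive integer with gcd(P,Q) = 1, and let M be the 4Q-dimensional matrix of the restricted CW walk. Every eigenvector v of M satisfies v(−Q,R) ≠ 0; that is, if Mv = λv for some λ ∈ ℂ and v ≠ 0, then the component of v at the index (−Q,R) is nonzero. -/
open Real Matrix

noncomputable def Cc (P Q n : ℤ) : ℂ :=
  ((Real.cos (π * (P : ℝ) * ((n : ℤ) : ℝ) / (2 * (Q : ℝ)))) : ℂ)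

noncomputable def Sc (P Q n : ℤ) : ℂ :=
  ((Real.sin (π * (P : ℝ) * ((n : ℤ) : ℝ) / (2 * (Q : ℝ)))) : ℂ)

def IdxOk (Q n : ℤ) (b : Bool) : Prop :=
  (-Q ≤ n ∧ n ≤ Q) ∧ ¬(n = -Q ∧ b = false) ∧ ¬(n = Q ∧ b = true)

instance (Q n : ℤ) (b : Bool) : Decidable (IdxOk Q n b) := by unfold IdxOk; infer_instance

def IdxOk.mk' {Q n : ℤ} {b : Bool} (h : IdxOk Q n b) : Idx Q :=
  ⟨⟨⟨n, Finset.mem_Icc.mpr h.1⟩, b⟩, h.2⟩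

noncomputable def Vt (Q : ℤ) (v : Idx Q → ℂ) (n : ℤ) (b : Bool) : ℂ :=
  if h : IdxOk Q n b then v h.mk' else 0

lemma Vt_eq (Q : ℤ) (v : Idx Q → ℂ) (i : Idx Q) :
    Vt Q v (i.1.1 : ℤ) i.1.2 = v i := by
  obtain ⟨⟨⟨n, hn⟩, b⟩, h⟩ := i
  have hc : IdxOk Q n b := ⟨Finset.mem_Icc.mp hn, h⟩
  simp only [Vt, dif_pos hc]
  rfl

lemma Vt_zero (Q : ℤ) (v : Idx Q → ℂ) (n : ℤ) (b : Bool) (h : ¬ IdxOk Q n b) :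
    Vt Q v n b = 0 := dif_neg h

lemma VtL_zero (Q : ℤ) (v : Idx Q → ℂ) (m : ℤ) (h : m ≤ -Q ∨ Q < m) :
    Vt Q v m false = 0 := by
  apply Vt_zero
  rintro ⟨⟨a, b⟩, c, d⟩
  simp only [and_true] at c
  omega

lemma VtR_zero (Q : ℤ) (v : Idx Q → ℂ) (m : ℤ) (h : m < -Q ∨ Q ≤ m) :
    Vt Q v m true = 0 := by
  apply Vt_zero
  rintro ⟨⟨a, b⟩, c, d⟩
  simp only [and_true] at d
  omega

lemma sum_ite_vt (Q : ℤ) (v : Idx Q → ℂ) (m : ℤ) (ξ : Bool) (c : ℂ) :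
    ∑ j : Idx Q, (if (j.1.1 : ℤ) = m ∧ j.1.2 = ξ then c else 0) * v j
      = c * Vt Q v m ξ := by
  by_cases h : IdxOk Q m ξ
  · rw [Finset.sum_eq_single h.mk']
    · rw [if_pos ⟨rfl, rfl⟩, Vt, dif_pos h]
    · intro j _ hj
      rw [if_neg, zero_mul]
      rintro ⟨h1, h2⟩
      apply hj
      apply Subtype.ext
      apply Prod.ext
      · exact Subtype.ext h1
      · exact h2
    · intro hmem; exact absurd (Finset.mem_univ _) hmem
  · rw [Finset.sum_eq_zero, Vt, dif_neg h, mul_zero]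
    intro j _
    rw [if_neg, zero_mul]
    rintro ⟨h1, h2⟩
    refine h ⟨⟨?_, ?_⟩, ?_, ?_⟩
    · rw [← h1]; exact (Finset.mem_Icc.mp j.1.1.2).1
    · rw [← h1]; exact (Finset.mem_Icc.mp j.1.1.2).2
    · rw [← h1, ← h2]; exact j.2.1
    · rw [← h1, ← h2]; exact j.2.2

lemma mulVec_Mmat (P Q : ℤ) (v : Idx Q → ℂ) (i : Idx Q) :
    (Mmat P Q).mulVec v i =
      (if i.1.2 = false then
        Cc P Q (i.1.1 : ℤ) * Vt Q v ((i.1.1 : ℤ) + 1) false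
          + (-(Sc P Q (i.1.1 : ℤ))) * Vt Q v ((i.1.1 : ℤ) - 1) true
      else
        Sc P Q (i.1.1 : ℤ) * Vt Q v ((i.1.1 : ℤ) + 1) false
          + Cc P Q (i.1.1 : ℤ) * Vt Q v ((i.1.1 : ℤ) - 1) true) := by
  by_cases hb : i.1.2 = false
  · rw [if_pos hb]
    show ∑ j, Mmat P Q i j * v j = _
    simp only [Mmat, hb, eq_self_iff_true, if_true]
    rw [Finset.sum_congr rfl (fun j _ => add_mul _ _ _), Finset.sum_add_distrib,
        sum_ite_vt, sum_ite_vt]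
    rfl
  · rw [if_neg hb]
    have hb' : i.1.2 = true := by simpa using hb
    show ∑ j, Mmat P Q i j * v j = _
    simp only [Mmat, hb', reduceCtorEq, if_false]
    rw [Finset.sum_congr rfl (fun j _ => add_mul _ _ _), Finset.sum_add_distrib,
        sum_ite_vt, sum_ite_vt]
    rfl

lemma row_eq (P Q : ℤ) (lam : ℂ) (v : Idx Q → ℂ)
    (heig : (Mmat P Q).mulVec v = lam • v)
    (n : ℤ) (b : Bool) (h : IdxOk Q n b) :
    (if b = false then
       Cc P Q n * Vt Q v (n + 1) false + (-(Sc P Q n)) * Vt Q v (n - 1) true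
     else
       Sc P Q n * Vt Q v (n + 1) false + Cc P Q n * Vt Q v (n - 1) true)
      = lam * Vt Q v n b := by
  have h1 := congrFun heig h.mk'
  rw [mulVec_Mmat] at h1
  have h2 : Vt Q v n b = v h.mk' := Vt_eq Q v h.mk'
  rw [h2]
  exact h1

lemma pyth (P Q n : ℤ) : Cc P Q n ^ 2 + Sc P Q n ^ 2 = 1 := by
  unfold Cc Sc
  exact_mod_cast Real.cos_sq_add_sin_sq (π * (P : ℝ) * ((n : ℤ) : ℝ) / (2 * (Q : ℝ)))

lemma Cc_boundary (P Q : ℤ) (hP : Odd P) (hQ : Q ≠ 0) (n : ℤ) (hn : n = Q ∨ n = -Q) :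
    Cc P Q n = 0 := by
  obtain ⟨k, hk⟩ := hP
  have hQR : (Q : ℝ) ≠ 0 := Int.cast_ne_zero.mpr hQ
  unfold Cc
  rw [Complex.ofReal_eq_zero, Real.cos_eq_zero_iff]
  rcases hn with rfl | rfl
  · exact ⟨k, by subst hk; push_cast; field_simp⟩
  · exact ⟨-(k+1), by subst hk; push_cast; field_simp; ring⟩

lemma Sc_boundary_ne (P Q : ℤ) (hP : Odd P) (hQ : Q ≠ 0) (n : ℤ) (hn : n = Q ∨ n = -Q) :
    Sc P Q n ≠ 0 := by
  intro h0
  have hc := Cc_boundary P Q hP hQ n hn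
  have hp := pyth P Q n
  rw [h0, hc] at hp
  simp at hp

lemma Cc_interior_ne (P Q : ℤ) (hgcd : Int.gcd P Q = 1) (hQ : 0 < Q) (n : ℤ)
    (h1 : -Q < n) (h2 : n < Q) : Cc P Q n ≠ 0 := by
  unfold Cc
  rw [Ne, Complex.ofReal_eq_zero, Real.cos_eq_zero_iff]
  rintro ⟨k, hk⟩
  have hQR : (Q : ℝ) ≠ 0 := Int.cast_ne_zero.mpr hQ.ne'
  have hpi : (π : ℝ) ≠ 0 := Real.pi_ne_zero
  have hr : (P : ℝ) * n = (2 * (k : ℝ) + 1) * Q := by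
    field_simp at hk
    apply mul_left_cancel₀ hpi
    linear_combination π * hk
  have hz : P * n = (2 * k + 1) * Q := by exact_mod_cast hr
  have hdvd : Q ∣ P * n := ⟨2 * k + 1, by linarith⟩
  have hcop : IsCoprime (Q : ℤ) P := Int.isCoprime_iff_gcd_eq_one.mpr (by rwa [Int.gcd_comm])
  have hdvd' : Q ∣ n := hcop.dvd_of_dvd_mul_left hdvd
  have hn0 : n = 0 := Int.eq_zero_of_abs_lt_dvd hdvd' (abs_lt.mpr ⟨h1, h2⟩)
  subst hn0
  rw [mul_zero] at hz
  rcases mul_eq_zero.mp hz.symm with h | h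
  · omega
  · omega



/-- Every eigenvector `v` of the restricted `CW` walk matrix has a
nonzero component at the index `(-Q, R)`. -/
theorem Mmat_eigenvector_component_ne_zero (P Q : ℤ) (hP : Odd P) (hQ : 0 < Q)
    (hgcd : Int.gcd P Q = 1) (lam : ℂ) (v : Idx Q → ℂ) (hv : v ≠ 0)
    (heig : (Mmat P Q).mulVec v = lam • v) :
    ∀ i : Idx Q, (i.1.1 : ℤ) = -Q → i.1.2 = true → v i ≠ 0 := by
  intro i hiQ hib hzero
  have hQ0 : Q ≠ 0 := hQ.ne'
  have dA : ∀ n : ℤ, -Q < n → n < Q →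
      Vt Q v (n + 1) false = lam * (Cc P Q n * Vt Q v n false + Sc P Q n * Vt Q v n true) := by
    intro n h1 h2
    have e1 := row_eq P Q lam v heig n false ⟨⟨h1.le, h2.le⟩, by simp [h1.ne'], by simp⟩
    have e2 := row_eq P Q lam v heig n true ⟨⟨h1.le, h2.le⟩, by simp, by simp [h2.ne]⟩
    rw [if_pos rfl] at e1
    rw [if_neg (by simp : ¬(true = false))] at e2
    linear_combination Cc P Q n * e1 + Sc P Q n * e2 - Vt Q v (n + 1) false * pyth P Q n
  have dB : ∀ n : ℤ, -Q < n → n < Q →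
      Vt Q v (n - 1) true = lam * (-(Sc P Q n) * Vt Q v n false + Cc P Q n * Vt Q v n true) := by
    intro n h1 h2
    have e1 := row_eq P Q lam v heig n false ⟨⟨h1.le, h2.le⟩, by simp [h1.ne'], by simp⟩
    have e2 := row_eq P Q lam v heig n true ⟨⟨h1.le, h2.le⟩, by simp, by simp [h2.ne]⟩
    rw [if_pos rfl] at e1
    rw [if_neg (by simp : ¬(true = false))] at e2
    linear_combination (-(Sc P Q n)) * e1 + Cc P Q n * e2 - Vt Q v (n - 1) true * pyth P Q n
  have eBR := row_eq P Q lam v heig (-Q) true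
    ⟨⟨le_refl _, by omega⟩, by simp, by simp; omega⟩
  rw [if_neg (by simp : ¬(true = false)), VtR_zero Q v _ (Or.inl (by omega)),
      mul_zero, add_zero] at eBR
  have eBL := row_eq P Q lam v heig Q false
    ⟨⟨by omega, le_refl _⟩, by simp; omega, by simp⟩
  rw [if_pos rfl, VtL_zero Q v _ (Or.inr (by omega)), mul_zero, zero_add] at eBL
  have hSQm := Sc_boundary_ne P Q hP hQ0 (-Q) (Or.inr rfl)
  have hSQp := Sc_boundary_ne P Q hP hQ0 Q (Or.inl rfl)
  have hallzero : (∀ m : ℤ, Vt Q v m false = 0) ∧ (∀ m : ℤ, Vt Q v m true = 0) := by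
    rcases eq_or_ne lam 0 with hlam | hlam
    · subst hlam
      have hA1 : Vt Q v (-Q + 1) false = 0 := by
        rw [zero_mul] at eBR
        exact (mul_eq_zero.mp eBR).resolve_left hSQm
      have hB1 : Vt Q v (Q - 1) true = 0 := by
        rw [zero_mul, neg_mul, neg_eq_zero] at eBL
        exact (mul_eq_zero.mp eBL).resolve_left hSQp
      constructor
      · intro m
        rcases le_or_gt m (-Q) with h | h
        · exact VtL_zero Q v m (Or.inl h)
        rcases lt_or_ge Q m with h' | h'
        · exact VtL_zero Q v m (Or.inr h')
        rcases eq_or_lt_of_le (show -Q + 1 ≤ m by omega) with h'' | h''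
        · rw [← h'']; exact hA1
        · have e := dA (m - 1) (by omega) (by omega)
          rw [zero_mul] at e
          simpa using e
      · intro m
        rcases lt_or_ge m (-Q) with h | h
        · exact VtR_zero Q v m (Or.inl h)
        rcases le_or_gt Q m with h' | h'
        · exact VtR_zero Q v m (Or.inr h')
        rcases eq_or_lt_of_le (show m ≤ Q - 1 by omega) with h'' | h''
        · rw [h'']; exact hB1
        · have e := dB (m + 1) (by omega) (by omega)
          rw [zero_mul] at e
          simpa using e
    · have hB0 : Vt Q v (-Q) true = 0 := by
        have h2 := Vt_eq Q v i
        rw [hiQ, hib] at h2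
        rw [h2]; exact hzero
      have hA1 : Vt Q v (-Q + 1) false = 0 := by
        rw [hB0, mul_zero] at eBR
        exact (mul_eq_zero.mp eBR).resolve_left hSQm
      have ind : ∀ k : ℕ, Vt Q v (-Q + 1 + k) false = 0 ∧ Vt Q v (-Q + k) true = 0 := by
        intro k
        induction k with
        | zero =>
          constructor
          · simpa using hA1
          · simpa using hB0
        | succ k ih =>
          have hk0 : (0:ℤ) ≤ (k:ℤ) := Int.natCast_nonneg k
          have hAn : Vt Q v (-Q + 1 + k) false = 0 := ih.1
          have hBn1 : Vt Q v (-Q + 1 + (k:ℤ) - 1) true = 0 := by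
            have h' : (-Q + (k:ℤ)) = -Q + 1 + (k:ℤ) - 1 := by ring
            rw [← h']; exact ih.2
          rcases lt_or_ge (-Q + 1 + (k:ℤ)) Q with h2 | h2
          · have h1 : -Q < -Q + 1 + (k:ℤ) := by omega
            have hBn : Vt Q v (-Q + 1 + (k:ℤ)) true = 0 := by
              have e := dB _ h1 h2
              rw [hAn, hBn1, mul_zero, zero_add] at e
              rcases mul_eq_zero.mp e.symm with h | h
              · exact absurd h hlam
              · rcases mul_eq_zero.mp h with h' | h'
                · exact absurd h' (Cc_interior_ne P Q hgcd hQ _ h1 h2)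
                · exact h'
            have hAn1 : Vt Q v (-Q + 1 + (k:ℤ) + 1) false = 0 := by
              have e := dA _ h1 h2
              rw [hAn, hBn] at e
              simpa using e
            constructor
            · have h' : (-Q + 1 + ((k+1 : ℕ) : ℤ)) = -Q + 1 + (k:ℤ) + 1 := by push_cast; ring
              rw [h']; exact hAn1
            · have h' : (-Q + ((k+1 : ℕ) : ℤ)) = -Q + 1 + (k:ℤ) := by push_cast; ring
              rw [h']; exact hBn
          · constructor
            · exact VtL_zero Q v _ (Or.inr (by push_cast; omega))
            · exact VtR_zero Q v _ (Or.inr (by push_cast; omega))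
      constructor
      · intro m
        rcases le_or_gt m (-Q) with h | h
        · exact VtL_zero Q v m (Or.inl h)
        · have hk : (-Q + 1 + ((m + Q - 1).toNat : ℤ)) = m := by
            rw [Int.toNat_of_nonneg (by omega)]; ring
          rw [← hk]; exact (ind _).1
      · intro m
        rcases lt_or_ge m (-Q) with h | h
        · exact VtR_zero Q v m (Or.inl h)
        · have hk : (-Q + ((m + Q).toNat : ℤ)) = m := by
            rw [Int.toNat_of_nonneg (by omega)]; ring
          rw [← hk]; exact (ind _).2
  apply hv
  funext j
  show v j = 0
  rw [← Vt_eq Q v j]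
  rcases Bool.eq_false_or_eq_true j.1.2 with hj | hj
  · rw [hj]; exact hallzero.2 _
  · rw [hj]; exact hallzero.1 _
end

section
/- Let P be an odd integer and Q a positive integer with gcd(P,Q) = 1, and let M be the 4Q-dimensional matrix of the restricted CW walk. All eigenvalues of M are simple: for every λ ∈ ℂ, the eigenspace ker(M − λ·id) has dimension at most 1. -/
open Real Matrix

noncomputable def Cang (P Q n : ℤ) : ℂ := ((Real.cos (π * (P:ℝ) * (n:ℝ) / (2 * (Q:ℝ)))) : ℂ)
noncomputable def Sang (P Q n : ℤ) : ℂ := ((Real.sin (π * (P:ℝ) * (n:ℝ) / (2 * (Q:ℝ)))) : ℂ)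


lemma CS_sq (P Q n : ℤ) : Cang P Q n ^ 2 + Sang P Q n ^ 2 = 1 := by
  unfold Cang Sang
  norm_cast
  rw [add_comm]
  exact Real.sin_sq_add_cos_sq _

lemma Sang_ne (P Q : ℤ) (hP : Odd P) (hQ : 0 < Q) {n : ℤ} (hn : n = Q ∨ n = -Q) :
    Sang P Q n ≠ 0 := by
  unfold Sang
  rw [Ne, Complex.ofReal_eq_zero, Real.sin_eq_zero_iff]
  rintro ⟨k, hk⟩
  have hQ' : (Q:ℝ) ≠ 0 := Int.cast_ne_zero.mpr hQ.ne'
  have hπ : (π:ℝ) ≠ 0 := Real.pi_ne_zero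
  have h2 : (P:ℝ) * n = k * (2 * Q) := by
    apply mul_left_cancel₀ hπ
    field_simp at hk
    linear_combination (-π) * hk
  have h3 : P * n = k * (2 * Q) := by exact_mod_cast h2
  obtain ⟨m, hm⟩ := hP
  rcases hn with h | h
  · rw [h] at h3
    have h4 : (P - 2*k) * Q = 0 := by linear_combination h3
    rcases mul_eq_zero.mp h4 with h | h
    · omega
    · omega
  · rw [h] at h3
    have h4 : (P + 2*k) * Q = 0 := by linear_combination -h3
    rcases mul_eq_zero.mp h4 with h | h
    · omega
    · omega

lemma Cang_ne (P Q : ℤ) (hQ : 0 < Q) (hgcd : Int.gcd P Q = 1) {n : ℤ}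
    (h1 : -Q < n) (h2 : n < Q) : Cang P Q n ≠ 0 := by
  unfold Cang
  rw [Ne, Complex.ofReal_eq_zero, Real.cos_eq_zero_iff]
  rintro ⟨k, hk⟩
  have hQ' : (Q:ℝ) ≠ 0 := Int.cast_ne_zero.mpr hQ.ne'
  have hπ : (π:ℝ) ≠ 0 := Real.pi_ne_zero
  have hr : (P:ℝ) * n = (2*k+1) * Q := by
    apply mul_left_cancel₀ hπ
    field_simp at hk
    linear_combination π * hk
  have h3 : P * n = (2*k+1) * Q := by exact_mod_cast hr
  have hdvd : Q ∣ P * n := ⟨2*k+1, by linarith⟩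
  have hco : IsCoprime (Q : ℤ) P := (Int.isCoprime_iff_gcd_eq_one.mpr hgcd).symm
  have hQn : Q ∣ n := hco.dvd_of_dvd_mul_left hdvd
  obtain ⟨t, rfl⟩ := hQn
  have ht : t = 0 := by
    rcases lt_trichotomy t 0 with h | h | h
    · nlinarith
    · exact h
    · nlinarith
  subst ht
  simp at h3
  rcases h3 with h | h
  · omega
  · omega


lemma ext_idx {Q : ℤ} {a b : Idx Q} (h1 : ((a.1.1 : ℤ)) = (b.1.1 : ℤ)) (h2 : a.1.2 = b.1.2) :
    a = b := by
  apply Subtype.ext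
  exact Prod.ext (Subtype.ext h1) h2

def mkIdx (Q : ℤ) (n : ℤ) (b : Bool) (h1 : -Q ≤ n) (h2 : n ≤ Q)
    (h3 : ¬(n = -Q ∧ b = false)) (h4 : ¬(n = Q ∧ b = true)) : Idx Q :=
  ⟨⟨⟨n, Finset.mem_Icc.mpr ⟨h1, h2⟩⟩, b⟩, ⟨h3, h4⟩⟩

@[simp] lemma mkIdx_fst (Q n : ℤ) (b : Bool) (h1 h2 h3 h4) :
    ((mkIdx Q n b h1 h2 h3 h4).1.1 : ℤ) = n := rfl
@[simp] lemma mkIdx_snd (Q n : ℤ) (b : Bool) (h1 h2 h3 h4) :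
    (mkIdx Q n b h1 h2 h3 h4).1.2 = b := rfl

lemma eigen_unique (P Q : ℤ) (hP : Odd P) (hQ : 0 < Q) (hgcd : Int.gcd P Q = 1)
    (lam : ℂ) (v : Idx Q → ℂ)
    (hv : ∀ i : Idx Q, ∑ j : Idx Q, Mmat P Q i j * v j = lam * v i)
    (h0 : ∀ i : Idx Q, (i.1.1 : ℤ) = -Q → v i = 0) : v = 0 := by
  classical
  set u : ℤ → Bool → ℂ :=
    fun m b => ∑ j : Idx Q, if ((j.1.1 : ℤ) = m ∧ j.1.2 = b) then v j else 0 with hu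
  have key_u : ∀ i : Idx Q, u (i.1.1 : ℤ) i.1.2 = v i := by
    intro i
    rw [hu]
    refine (Finset.sum_eq_single i (fun j _ hne => if_neg fun h => hne (ext_idx h.1 h.2))
      (fun h => absurd (Finset.mem_univ i) h)).trans (if_pos ⟨rfl, rfl⟩)
  have u_zero : ∀ (m : ℤ) (b : Bool),
      (m < -Q ∨ Q < m ∨ (m = -Q ∧ b = false) ∨ (m = Q ∧ b = true)) → u m b = 0 := by
    intro m b hm
    apply Finset.sum_eq_zero
    intro j _
    rw [if_neg]
    rintro ⟨hj1, hj2⟩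
    have hmem := j.1.1.2
    rw [Finset.mem_Icc] at hmem
    obtain ⟨hc1, hc2⟩ := j.2
    rcases hm with h | h | ⟨he, hb⟩ | ⟨he, hb⟩
    · omega
    · omega
    · exact hc1 ⟨by rw [hj1, he], by rw [hj2, hb]⟩
    · exact hc2 ⟨by rw [hj1, he], by rw [hj2, hb]⟩
  have eqL : ∀ n : ℤ, -Q < n → n ≤ Q →
      Cang P Q n * u (n+1) false - Sang P Q n * u (n-1) true = lam * u n false := by
    intro n hn1 hn2
    set i : Idx Q := mkIdx Q n false (le_of_lt hn1) hn2
      (fun h => absurd h.1 (by omega)) (fun h => by simp at h) with hi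
    have h := hv i
    have hsum : ∑ j : Idx Q, Mmat P Q i j * v j
        = Cang P Q n * u (n+1) false + (-Sang P Q n) * u (n-1) true := by
      have hterm : ∀ j : Idx Q, Mmat P Q i j * v j =
          (if ((j.1.1 : ℤ) = n + 1 ∧ j.1.2 = false) then Cang P Q n * v j else 0)
        + (if ((j.1.1 : ℤ) = n - 1 ∧ j.1.2 = true) then (-Sang P Q n) * v j else 0) := by
        intro j
        show ((if _ then _ else 0) + (if _ then _ else 0) : ℂ) * v j = _
        simp only [add_mul, ite_mul, zero_mul]
        rfl
      rw [Finset.sum_congr rfl (fun j _ => hterm j), Finset.sum_add_distrib]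
      congr 1
      · rw [hu, Finset.mul_sum]
        exact Finset.sum_congr rfl (fun j _ => by rw [mul_ite, mul_zero])
      · rw [hu, Finset.mul_sum]
        exact Finset.sum_congr rfl (fun j _ => by rw [mul_ite, mul_zero])
    rw [hsum] at h
    have hvi : u n false = v i := key_u i
    rw [← hvi] at h
    linear_combination h
  have eqR : ∀ n : ℤ, -Q ≤ n → n < Q →
      Sang P Q n * u (n+1) false + Cang P Q n * u (n-1) true = lam * u n true := by
    intro n hn1 hn2
    set i : Idx Q := mkIdx Q n true hn1 (le_of_lt hn2)
      (fun h => by simp at h) (fun h => absurd h.1 (by omega)) with hi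
    have h := hv i
    have hsum : ∑ j : Idx Q, Mmat P Q i j * v j
        = Sang P Q n * u (n+1) false + Cang P Q n * u (n-1) true := by
      have hterm : ∀ j : Idx Q, Mmat P Q i j * v j =
          (if ((j.1.1 : ℤ) = n + 1 ∧ j.1.2 = false) then Sang P Q n * v j else 0)
        + (if ((j.1.1 : ℤ) = n - 1 ∧ j.1.2 = true) then Cang P Q n * v j else 0) := by
        intro j
        show ((if _ then _ else 0) + (if _ then _ else 0) : ℂ) * v j = _
        simp only [add_mul, ite_mul, zero_mul]
        rfl
      rw [Finset.sum_congr rfl (fun j _ => hterm j), Finset.sum_add_distrib]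
      congr 1
      · rw [hu, Finset.mul_sum]
        exact Finset.sum_congr rfl (fun j _ => by rw [mul_ite, mul_zero])
      · rw [hu, Finset.mul_sum]
        exact Finset.sum_congr rfl (fun j _ => by rw [mul_ite, mul_zero])
    rw [hsum] at h
    have hvi : u n true = v i := key_u i
    rw [← hvi] at h
    linear_combination h
  have hustart : u (-Q) true = 0 := by
    set i0 : Idx Q := mkIdx Q (-Q) true le_rfl (by omega)
      (fun h => by simp at h) (fun h => absurd h.1 (by omega)) with hi0
    have hkey : u (-Q) true = v i0 := key_u i0
    rw [hkey]
    exact h0 i0 rfl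
  have main : ∀ i : Idx Q, v i = 0 := by
    by_cases hlam : lam = 0
    · have hx : ∀ n : ℤ, -Q < n → n < Q → u (n+1) false = 0 ∧ u (n-1) true = 0 := by
        intro n h1 h2
        have hL := eqL n h1 (le_of_lt h2)
        have hR := eqR n (le_of_lt h1) h2
        rw [hlam, zero_mul] at hL hR
        have hcs := CS_sq P Q n
        constructor
        · linear_combination Cang P Q n * hL + Sang P Q n * hR - u (n+1) false * hcs
        · linear_combination (- Sang P Q n) * hL + Cang P Q n * hR - u (n-1) true * hcs
      intro i
      rw [← key_u i]
      have hmem := i.1.1.2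
      rw [Finset.mem_Icc] at hmem
      obtain ⟨hc1, hc2⟩ := i.2
      cases hb : (i.1.2 : Bool) with
      | false =>
        have hn1 : -Q < (i.1.1 : ℤ) := lt_of_le_of_ne hmem.1 (fun h => hc1 ⟨h.symm, hb⟩)
        by_cases hcase : (i.1.1 : ℤ) = -Q + 1
        · have hR := eqR (-Q) le_rfl (by omega)
          rw [u_zero (-Q-1) true (Or.inl (by omega)), hustart, mul_zero, add_zero,
            mul_zero] at hR
          have hS := Sang_ne P Q hP hQ (Or.inr rfl)
          have hx1 := (mul_eq_zero.mp hR).resolve_left hS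
          rw [hcase]
          exact hx1
        · have h := (hx ((i.1.1 : ℤ) - 1) (by omega) (by omega)).1
          rw [show ((i.1.1 : ℤ) - 1 + 1) = (i.1.1 : ℤ) by ring] at h
          exact h
      | true =>
        have hn2 : (i.1.1 : ℤ) < Q := lt_of_le_of_ne hmem.2 (fun h => hc2 ⟨h, hb⟩)
        by_cases hcase : (i.1.1 : ℤ) = Q - 1
        · have hL := eqL Q (by omega) le_rfl
          rw [u_zero (Q+1) false (Or.inr (Or.inl (by omega))), hlam, zero_mul, mul_zero,
            zero_sub, neg_eq_zero] at hL
          have hS := Sang_ne P Q hP hQ (Or.inl rfl)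
          have hy1 := (mul_eq_zero.mp hL).resolve_left hS
          rw [hcase]
          exact hy1
        · have h := (hx ((i.1.1 : ℤ) + 1) (by omega) (by omega)).2
          rw [show ((i.1.1 : ℤ) + 1 - 1) = (i.1.1 : ℤ) by ring] at h
          exact h
    · have step : ∀ k : ℕ, (k : ℤ) ≤ 2*Q - 1 →
          u (-Q + k + 1) false = 0 ∧ u (-Q + k) true = 0 := by
        intro k
        induction k with
        | zero =>
          intro _
          constructor
          · have hR := eqR (-Q) le_rfl (by omega)
            rw [u_zero (-Q-1) true (Or.inl (by omega)), hustart, mul_zero, add_zero,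
              mul_zero] at hR
            have hS := Sang_ne P Q hP hQ (Or.inr rfl)
            have hx1 := (mul_eq_zero.mp hR).resolve_left hS
            rw [show (-Q + ((0:ℕ):ℤ) + 1) = -Q + 1 by simp]
            exact hx1
          · rw [show (-Q + ((0:ℕ):ℤ)) = -Q by simp]
            exact hustart
        | succ k ih =>
          intro hk
          have hk' : (k : ℤ) ≤ 2*Q - 1 := by push_cast at hk ⊢; omega
          obtain ⟨ihx, ihy⟩ := ih hk'
          have hb1 : -Q < -Q + (k:ℤ) + 1 := by omega
          have hb2 : -Q + (k:ℤ) + 1 < Q := by push_cast at hk; omega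
          have hL := eqL (-Q + (k:ℤ) + 1) hb1 (le_of_lt hb2)
          have hR := eqR (-Q + (k:ℤ) + 1) (le_of_lt hb1) hb2
          rw [ihx, mul_zero, show (-Q + (k:ℤ) + 1 - 1) = -Q + (k:ℤ) by ring, ihy,
            mul_zero, sub_zero] at hL
          have hC := Cang_ne P Q hQ hgcd hb1 hb2
          have hx0 : u (-Q + (k:ℤ) + 1 + 1) false = 0 := (mul_eq_zero.mp hL).resolve_left hC
          rw [show (-Q + (k:ℤ) + 1 - 1) = -Q + (k:ℤ) by ring, ihy, mul_zero, add_zero,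
            hx0, mul_zero] at hR
          have hy0 : u (-Q + (k:ℤ) + 1) true = 0 := by
            rcases mul_eq_zero.mp hR.symm with h | h
            · exact absurd h hlam
            · exact h
          constructor
          · rw [show (-Q + ((k+1:ℕ):ℤ) + 1) = -Q + (k:ℤ) + 1 + 1 by push_cast; ring]
            exact hx0
          · rw [show (-Q + ((k+1:ℕ):ℤ)) = -Q + (k:ℤ) + 1 by push_cast; ring]
            exact hy0
      intro i
      rw [← key_u i]
      have hmem := i.1.1.2
      rw [Finset.mem_Icc] at hmem
      obtain ⟨hc1, hc2⟩ := i.2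
      cases hb : (i.1.2 : Bool) with
      | false =>
        have hn1 : -Q < (i.1.1 : ℤ) := lt_of_le_of_ne hmem.1 (fun h => hc1 ⟨h.symm, hb⟩)
        obtain ⟨x0, _⟩ := step ((i.1.1 : ℤ) + Q - 1).toNat
          (by rw [Int.toNat_of_nonneg (by omega)]; omega)
        rw [show ((i.1.1 : ℤ)) = -Q + (((i.1.1 : ℤ) + Q - 1).toNat : ℤ) + 1 from by
          rw [Int.toNat_of_nonneg (by omega)]; ring]
        exact x0
      | true =>
        have hn2 : (i.1.1 : ℤ) < Q := lt_of_le_of_ne hmem.2 (fun h => hc2 ⟨h, hb⟩)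
        obtain ⟨_, y0⟩ := step ((i.1.1 : ℤ) + Q).toNat
          (by rw [Int.toNat_of_nonneg (by omega)]; omega)
        rw [show ((i.1.1 : ℤ)) = -Q + (((i.1.1 : ℤ) + Q).toNat : ℤ) from by
          rw [Int.toNat_of_nonneg (by omega)]; ring]
        exact y0
  funext i
  exact main i

/-- All eigenvalues of the restricted `CW` walk matrix are simple:
every eigenspace has dimension at most one, i.e. any two eigenvectors for the same
eigenvalue are proportional. -/
theorem Mmat_eigenvalues_simple (P Q : ℤ) (hP : Odd P) (hQ : 0 < Q)
    (hgcd : Int.gcd P Q = 1) (lam : ℂ) :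
    Module.finrank ℂ
      (LinearMap.ker (Matrix.toLin' (Mmat P Q) -
        lam • (LinearMap.id : (Idx Q → ℂ) →ₗ[ℂ] (Idx Q → ℂ)))) ≤ 1 := by
  set K := LinearMap.ker (Matrix.toLin' (Mmat P Q) -
        lam • (LinearMap.id : (Idx Q → ℂ) →ₗ[ℂ] (Idx Q → ℂ))) with hK
  let i0 : Idx Q := mkIdx Q (-Q) true le_rfl (by omega)
    (fun h => by simp at h) (fun h => absurd h.1 (by omega))
  let f : K →ₗ[ℂ] ℂ := (LinearMap.proj i0).comp K.subtype
  have hinj : Function.Injective f := by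
    rw [← LinearMap.ker_eq_bot, LinearMap.ker_eq_bot']
    intro x hx
    have hmem : (Matrix.toLin' (Mmat P Q) -
        lam • (LinearMap.id : (Idx Q → ℂ) →ₗ[ℂ] (Idx Q → ℂ))) (x : Idx Q → ℂ) = 0 :=
      LinearMap.mem_ker.mp x.2
    set w : Idx Q → ℂ := (x : Idx Q → ℂ) with hw
    have hv : ∀ i : Idx Q, ∑ j : Idx Q, Mmat P Q i j * w j = lam * w i := by
      intro i
      have h := congrFun hmem i
      simp only [LinearMap.sub_apply, LinearMap.smul_apply, LinearMap.id_apply,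
        Pi.sub_apply, Pi.smul_apply, smul_eq_mul, Pi.zero_apply, sub_eq_zero,
        Matrix.toLin'_apply] at h
      rw [← h]
      simp [Matrix.mulVec, dotProduct]
    have h0 : ∀ i : Idx Q, (i.1.1 : ℤ) = -Q → w i = 0 := by
      intro i hi
      have hb : i.1.2 = true := by
        cases hcb : (i.1.2 : Bool)
        · exact absurd ⟨hi, hcb⟩ i.2.1
        · rfl
      have hii : i = i0 := ext_idx (by rw [hi]; rfl) (by rw [hb]; rfl)
      rw [hii]
      exact hx
    have hzero := eigen_unique P Q hP hQ hgcd lam w hv h0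
    exact Subtype.ext hzero
  have h1 := LinearMap.finrank_le_finrank_of_injective hinj
  rw [Module.finrank_self] at h1
  exact h1
end
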